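/- arXiv:2411.00616 — 10 statements merged into one kernel-verified Lean document; each statement's English description precedes it below -/
import Mathlib

section
/- If S is a multiplicatively closed subset of an integral domain D (not containing 0), then the reciprocal complement of the localization S^{-1}D equals R(D)[S], the subring of the quotient field generated by R(D) and S. -/
/-- The reciprocal complement of a subring `A` of a field `F`: the subring of `F`
generated by the inverses of the nonzero elements of `A`. -/
def recipSub {F : Type*} [Field F] (A : Subring F) : Subring F :=
  Subring.closure {y : F | ∃ a ∈ A, a ≠ 0 ∧ y = a⁻¹}

/-- The localization `S⁻¹D`, viewed as the subring of the quotient field generated by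
(the image of) `D` together with the inverses of (the images of) the elements of `S`. -/
def locSubring (D F : Type*) [CommRing D] [Field F] [Algebra D F] (S : Submonoid D) :
    Subring F :=
  Subring.closure (Set.range (algebraMap D F) ∪
    {y : F | ∃ s ∈ S, y = (algebraMap D F s)⁻¹})

lemma mem_loc (D F : Type*) [CommRing D] [IsDomain D] [Field F] [Algebra D F]
    [IsFractionRing D F] (S : Submonoid D) (hS : (0 : D) ∉ S) {x : F}
    (hx : x ∈ locSubring D F S) :
    ∃ d, ∃ s ∈ S, x = algebraMap D F d * (algebraMap D F s)⁻¹ := by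
  have hinj : Function.Injective (algebraMap D F) := IsFractionRing.injective D F
  have hs0 : ∀ s ∈ S, algebraMap D F s ≠ 0 := by
    intro s hs h
    have : s = 0 := hinj (by simp [h])
    exact hS (this ▸ hs)
  induction hx using Subring.closure_induction with
  | mem x hx =>
    rcases hx with ⟨d, rfl⟩ | ⟨s, hs, rfl⟩
    · exact ⟨d, 1, S.one_mem, by simp⟩
    · exact ⟨1, s, hs, by simp⟩
  | zero => exact ⟨0, 1, S.one_mem, by simp⟩
  | one => exact ⟨1, 1, S.one_mem, by simp⟩
  | add x y hx hy ihx ihy =>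
    obtain ⟨d1, s1, hs1, rfl⟩ := ihx
    obtain ⟨d2, s2, hs2, rfl⟩ := ihy
    refine ⟨d1 * s2 + d2 * s1, s1 * s2, S.mul_mem hs1 hs2, ?_⟩
    have h1 := hs0 s1 hs1
    have h2 := hs0 s2 hs2
    field_simp
    simp only [map_add, map_mul]
    ring
  | neg x hx ihx =>
    obtain ⟨d, s, hs, rfl⟩ := ihx
    exact ⟨-d, s, hs, by simp⟩
  | mul x y hx hy ihx ihy =>
    obtain ⟨d1, s1, hs1, rfl⟩ := ihx
    obtain ⟨d2, s2, hs2, rfl⟩ := ihy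
    refine ⟨d1 * d2, s1 * s2, S.mul_mem hs1 hs2, ?_⟩
    simp [mul_inv]
    ring

/-- For a multiplicatively closed subset `S` of `D` not containing `0`, one has
`R(S⁻¹D) = R(D)[S]`, the subring generated by `R(D)` and `S`. -/
theorem stmt1 (D F : Type*) [CommRing D] [IsDomain D] [Field F] [Algebra D F]
    [IsFractionRing D F] (S : Submonoid D) (hS : (0 : D) ∉ S) :
    recipSub (locSubring D F S) =
      Subring.closure (↑(recipSub ((algebraMap D F).range)) ∪
        (algebraMap D F) '' S) := by
  have hinj : Function.Injective (algebraMap D F) := IsFractionRing.injective D F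
  have hs0 : ∀ s ∈ S, algebraMap D F s ≠ 0 := by
    intro s hs h
    have : s = 0 := hinj (by simp [h])
    exact hS (this ▸ hs)
  apply le_antisymm
  · -- ⊆
    rw [recipSub, Subring.closure_le]
    rintro y ⟨a, ha, ha0, rfl⟩
    obtain ⟨d, s, hs, rfl⟩ := mem_loc D F S hS ha
    have hd0 : algebraMap D F d ≠ 0 := by
      intro h; apply ha0; simp [h]
    have hsF := hs0 s hs
    rw [mul_inv, inv_inv]
    apply Subring.mul_mem
    · apply Subring.subset_closure
      left
      exact Subring.subset_closure ⟨algebraMap D F d, ⟨d, rfl⟩, hd0, rfl⟩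
    · exact Subring.subset_closure (Or.inr ⟨s, hs, rfl⟩)
  · -- ⊇
    rw [Subring.closure_le]
    rintro y (hy | ⟨s, hs, rfl⟩)
    · -- y ∈ recipSub (range)
      refine Subring.closure_mono ?_ hy
      rintro z ⟨a, ⟨d, rfl⟩, ha0, rfl⟩
      refine ⟨algebraMap D F d, ?_, ha0, rfl⟩
      exact Subring.subset_closure (Or.inl ⟨d, rfl⟩)
    · -- y = algebraMap s
      have hsF := hs0 s hs
      have : (algebraMap D F s) = ((algebraMap D F s)⁻¹)⁻¹ := by rw [inv_inv]
      rw [this]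
      apply Subring.subset_closure
      exact ⟨(algebraMap D F s)⁻¹, Subring.subset_closure (Or.inr ⟨s, hs, rfl⟩),
        inv_ne_zero hsF, rfl⟩
end

section
/- If x and y are Egyptian elements of an integral domain D, then xy is an Egyptian element; moreover, if x + y is nonzero then x + y is an Egyptian element. -/
/-- An element `x` of the quotient field is Egyptian with respect to `D` if it is a
(nonempty) finite sum of reciprocals of nonzero elements of `D`. -/
def IsEgyptian (D F : Type*) [CommRing D] [Field F] [Algebra D F] (x : F) : Prop :=
  ∃ (n : ℕ) (f : Fin n → D), 0 < n ∧ (∀ i, f i ≠ 0) ∧ x = ∑ i, (algebraMap D F (f i))⁻¹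

/-- If `x` and `y` are Egyptian elements, then `xy` is Egyptian, and if `x + y ≠ 0`
then `x + y` is Egyptian. -/
theorem stmt2 (D F : Type*) [CommRing D] [IsDomain D] [Field F] [Algebra D F]
    [IsFractionRing D F] (x y : F) (hx : IsEgyptian D F x) (hy : IsEgyptian D F y) :
    IsEgyptian D F (x * y) ∧ (x + y ≠ 0 → IsEgyptian D F (x + y)) := by
  obtain ⟨n, f, hn, hf, hxe⟩ := hx
  obtain ⟨m, g, hm, hg, hye⟩ := hy
  constructor
  · refine ⟨n * m, fun k => f (finProdFinEquiv.symm k).1 * g (finProdFinEquiv.symm k).2,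
      Nat.mul_pos hn hm, fun k => mul_ne_zero (hf _) (hg _), ?_⟩
    rw [hxe, hye, Finset.sum_mul_sum]
    simp only [map_mul, mul_inv]
    rw [Equiv.sum_comp finProdFinEquiv.symm
      (fun p : Fin n × Fin m => (algebraMap D F (f p.1))⁻¹ * (algebraMap D F (g p.2))⁻¹),
      Fintype.sum_prod_type]
  · intro _
    refine ⟨n + m, Fin.append f g, Nat.add_pos_left hn m, ?_, ?_⟩
    · intro i
      refine i.addCases (fun j => ?_) (fun j => ?_)
      · rw [Fin.append_left]; exact hf j
      · rw [Fin.append_right]; exact hg j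
    · rw [hxe, hye, Fin.sum_univ_add]
      simp [Fin.append_left, Fin.append_right]
end

section
/- If D is an integral domain containing a field K and x is a nonzero element of D that is algebraic over K, then x is an Egyptian element of D. -/
/-- If `D` is an integral domain containing a field `K` and `x ∈ D` is nonzero and
algebraic over `K`, then `x` is an Egyptian element of `D`. -/
theorem stmt4 (K D F : Type*) [Field K] [CommRing D] [IsDomain D] [Algebra K D]
    [Field F] [Algebra D F] [IsFractionRing D F]
    (x : D) (hx : x ≠ 0) (halg : IsAlgebraic K x) :
    IsEgyptian D F (algebraMap D F x) := by
  obtain ⟨u, rfl⟩ := halg.isIntegral.isUnit hx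
  refine ⟨1, fun _ => (u⁻¹ : Dˣ), one_pos, fun _ => u⁻¹.ne_zero, ?_⟩
  rw [Fin.sum_univ_one]
  refine eq_inv_of_mul_eq_one_left ?_
  rw [← map_mul]
  simp
end

section
/- Let D be an integral domain, let x, y be nonzero elements of D with x + y nonzero, and let p be a prime ideal of R(D). If 1/(x+y) lies in p, then at least one of 1/x and 1/y lies in p. -/
/-- The reciprocal complement of `D` inside a field `F`. -/
def recipCompl (D F : Type*) [CommRing D] [Field F] [Algebra D F] : Subring F :=
  Subring.closure {y : F | ∃ d : D, d ≠ 0 ∧ y = (algebraMap D F d)⁻¹}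

/-- The element `1/z` of `R(D)`, for `z` a nonzero element of `D`. -/
def recipElem (D F : Type*) [CommRing D] [Field F] [Algebra D F] (z : D) (hz : z ≠ 0) :
    recipCompl D F :=
  ⟨(algebraMap D F z)⁻¹, Subring.subset_closure ⟨z, hz, rfl⟩⟩

/-- If `1/(x+y)` lies in a prime ideal `p` of `R(D)`, then `1/x ∈ p` or `1/y ∈ p`. -/
theorem stmt6 (D F : Type*) [CommRing D] [IsDomain D] [Field F] [Algebra D F]
    [IsFractionRing D F] (x y : D) (hx : x ≠ 0) (hy : y ≠ 0) (hxy : x + y ≠ 0)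
    (p : Ideal (recipCompl D F)) (hp : p.IsPrime)
    (h : recipElem D F (x + y) hxy ∈ p) :
    recipElem D F x hx ∈ p ∨ recipElem D F y hy ∈ p := by
  have inj := IsFractionRing.injective D F
  have hx' : algebraMap D F x ≠ 0 := fun h0 => hx (inj (by simpa using h0))
  have hy' : algebraMap D F y ≠ 0 := fun h0 => hy (inj (by simpa using h0))
  have hxy' : algebraMap D F (x + y) ≠ 0 := fun h0 => hxy (inj (by simpa using h0))
  have key : recipElem D F x hx * recipElem D F y hy =
      recipElem D F (x + y) hxy * (recipElem D F x hx + recipElem D F y hy) := by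
    apply Subtype.ext
    simp only [recipElem, Subring.coe_mul, Subring.coe_add, MulMemClass.coe_mul,
      AddMemClass.coe_add, map_add] at *
    field_simp
    ring
  apply hp.mem_or_mem
  rw [key]
  exact Ideal.mul_mem_right _ _ h
end

section
/- Let D be an integral domain, let x_1, ..., x_n be nonzero elements of D such that the sum s = 1/x_1 + ... + 1/x_n cannot be written as a sum of fewer than n reciprocals of nonzero elements of D (in particular s ≠ 0). If s lies in a prime ideal p of R(D), then 1/x_i lies in p for every i. -/
private lemma prime_prod_mem {R ι : Type*} [CommRing R] {p : Ideal R} (hp : p.IsPrime)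
    (s : Finset ι) (f : ι → R) (h : ∏ i ∈ s, f i ∈ p) : ∃ i ∈ s, f i ∈ p := by
  classical
  induction s using Finset.induction with
  | empty => simp at h; exact absurd (p.eq_top_of_isUnit_mem h isUnit_one) hp.ne_top
  | insert x s hx ih =>
      rw [Finset.prod_insert hx] at h
      rcases hp.mem_or_mem h with h1 | h2
      · exact ⟨_, Finset.mem_insert_self _ _, h1⟩
      · obtain ⟨i, hi, hip⟩ := ih h2
        exact ⟨i, Finset.mem_insert_of_mem hi, hip⟩

private lemma aux (D F : Type*) [CommRing D] [IsDomain D] [Field F] [Algebra D F]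
    [IsFractionRing D F] : ∀ (n : ℕ) (f : Fin n → D) (hf : ∀ i, f i ≠ 0)
    (s : recipCompl D F), (s : F) = ∑ i, (algebraMap D F (f i))⁻¹ →
    (¬ ∃ (m : ℕ) (g : Fin m → D), m < n ∧ (∀ j, g j ≠ 0) ∧
      (s : F) = ∑ j, (algebraMap D F (g j))⁻¹) →
    ∀ (p : Ideal (recipCompl D F)), p.IsPrime → s ∈ p →
    ∀ i, recipElem D F (f i) (hf i) ∈ p := by
  classical
  intro n
  induction n with
  | zero => exact fun f hf s hs hmin p hp hsp i => i.elim0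
  | succ m ih =>
    intro f hf s hs hmin p hp hsp
    set a : Fin (m + 1) → F := fun i => algebraMap D F (f i) with ha_def
    have ha : ∀ i, a i ≠ 0 := fun i => by
      simpa [ha_def] using (map_ne_zero_iff _ (IsFractionRing.injective D F)).2 (hf i)
    -- s ≠ 0
    have hs0 : (s : F) ≠ 0 := by
      intro h0
      exact hmin ⟨0, Fin.elim0, Nat.succ_pos m, fun j => j.elim0, by simp [h0]⟩
    -- the numerator e
    set eD : D := ∑ i, ∏ j ∈ Finset.univ.erase i, f j with heD
    have key : (s : F) * ∏ j, a j = algebraMap D F eD := by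
      rw [hs, heD, map_sum, Finset.sum_mul]
      refine Finset.sum_congr rfl fun i _ => ?_
      rw [map_prod]
      rw [← Finset.mul_prod_erase Finset.univ a (Finset.mem_univ i)]
      rw [inv_mul_cancel_left₀ (ha i)]
    have hprodne : (∏ j, a j) ≠ 0 := Finset.prod_ne_zero_iff.2 fun j _ => ha j
    have heF : algebraMap D F eD ≠ 0 := by
      rw [← key]; exact mul_ne_zero hs0 hprodne
    have he : eD ≠ 0 := fun h => heF (by rw [h, map_zero])
    have hN : (∏ j, f j) ≠ 0 := Finset.prod_ne_zero_iff.2 fun j _ => hf j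
    -- (∏ a)⁻¹ = s * e⁻¹  lies in p
    have hrNp : (∏ i, recipElem D F (f i) (hf i)) ∈ p := by
      have : (∏ i, recipElem D F (f i) (hf i)) = recipElem D F eD he * s := by
        apply Subtype.ext
        push_cast
        simp only [recipElem]
        rw [Finset.prod_inv_distrib]
        have hsval : (s : F) = algebraMap D F eD * (∏ j, a j)⁻¹ := by
          rw [← key, mul_assoc, mul_inv_cancel₀ hprodne, mul_one]
        rw [hsval, inv_mul_cancel_left₀ heF]
      rw [this]
      exact Ideal.mul_mem_left p _ hsp
    obtain ⟨i₀, -, hi₀⟩ := prime_prod_mem hp Finset.univ _ hrNp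
    -- the remaining sum
    set g : Fin m → D := fun j => f (i₀.succAbove j) with hg
    have hgne : ∀ j, g j ≠ 0 := fun j => hf _
    set s' : recipCompl D F := s - recipElem D F (f i₀) (hf i₀) with hs'
    have hs'val : (s' : F) = ∑ j, (algebraMap D F (g j))⁻¹ := by
      have := Fin.sum_univ_succAbove (fun i => (a i)⁻¹) i₀
      rw [hs']
      push_cast
      rw [hs, this]
      simp [recipElem, hg, ha_def]
    have hs'min : ¬ ∃ (m' : ℕ) (g' : Fin m' → D), m' < m ∧ (∀ j, g' j ≠ 0) ∧
        (s' : F) = ∑ j, (algebraMap D F (g' j))⁻¹ := by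
      rintro ⟨m', g', hm', hg', hgs⟩
      refine hmin ⟨m' + 1, Fin.cons (f i₀) g', by omega, ?_, ?_⟩
      · intro j
        refine Fin.cases ?_ ?_ j
        · exact hf i₀
        · exact fun j' => hg' j'
      · have : (s : F) = (s' : F) + (a i₀)⁻¹ := by rw [hs']; push_cast; ring_nf; simp [recipElem, ha_def]
        rw [this, hgs, Fin.sum_univ_succ]
        simp [ha_def]
        ring
    have hs'p : s' ∈ p := by
      rw [hs']
      exact Ideal.sub_mem p hsp hi₀
    have hrest := ih g hgne s' hs'val hs'min p hp hs'p
    intro i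
    rcases eq_or_ne i i₀ with rfl | hne
    · exact hi₀
    · obtain ⟨j, rfl⟩ := Fin.exists_succAbove_eq hne
      exact hrest j

/-- If `s = 1/x₁ + ⋯ + 1/xₙ` cannot be written as a sum of fewer than `n` reciprocals
of nonzero elements of `D` (in particular `s ≠ 0`), and `s` lies in a prime ideal `p`
of `R(D)`, then `1/xᵢ ∈ p` for every `i`. -/
theorem stmt7 (D F : Type*) [CommRing D] [IsDomain D] [Field F] [Algebra D F]
    [IsFractionRing D F] (n : ℕ) (f : Fin n → D) (hf : ∀ i, f i ≠ 0)
    (s : recipCompl D F) (hs : (s : F) = ∑ i, (algebraMap D F (f i))⁻¹)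
    (hmin : ¬ ∃ (m : ℕ) (g : Fin m → D), m < n ∧ (∀ j, g j ≠ 0) ∧
      (s : F) = ∑ j, (algebraMap D F (g j))⁻¹)
    (p : Ideal (recipCompl D F)) (hp : p.IsPrime) (hsp : s ∈ p) :
    ∀ i, recipElem D F (f i) (hf i) ∈ p :=
  aux D F n f hf s hs hmin p hp hsp
end

section
/- For nonzero elements x, y of an integral domain D, the prime ideal p_{xy} of R(D) is the unique largest prime ideal of R(D) contained in p_x ∩ p_y, where for a nonzero z in D, p_z denotes the unique prime ideal of R(D) maximal with respect to not containing 1/z. -/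
/-- `P` is the (unique) prime ideal of `R(D)` maximal with respect to not
containing `1/z`. -/
def IsMaxPrimeAvoiding (D F : Type*) [CommRing D] [Field F] [Algebra D F]
    (z : D) (hz : z ≠ 0) (P : Ideal (recipCompl D F)) : Prop :=
  P.IsPrime ∧ recipElem D F z hz ∉ P ∧
    ∀ Q : Ideal (recipCompl D F), Q.IsPrime → recipElem D F z hz ∉ Q → Q ≤ P

/-- `p_{xy}` is the unique largest prime ideal of `R(D)` contained in `p_x ∩ p_y`. -/
theorem stmt8 (D F : Type*) [CommRing D] [IsDomain D] [Field F] [Algebra D F]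
    [IsFractionRing D F] (x y : D) (hx : x ≠ 0) (hy : y ≠ 0)
    (Px Py Pxy : Ideal (recipCompl D F))
    (hPx : IsMaxPrimeAvoiding D F x hx Px) (hPy : IsMaxPrimeAvoiding D F y hy Py)
    (hPxy : IsMaxPrimeAvoiding D F (x * y) (mul_ne_zero hx hy) Pxy) :
    Pxy ≤ Px ⊓ Py ∧
      ∀ Q : Ideal (recipCompl D F), Q.IsPrime → Q ≤ Px ⊓ Py → Q ≤ Pxy := by
  obtain ⟨hPxp, hPxn, hPxm⟩ := hPx
  obtain ⟨hPyp, hPyn, hPym⟩ := hPy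
  obtain ⟨hPxyp, hPxyn, hPxym⟩ := hPxy
  have key : recipElem D F (x * y) (mul_ne_zero hx hy) =
      recipElem D F x hx * recipElem D F y hy := by
    apply Subtype.ext
    simp [recipElem, map_mul, mul_inv, mul_comm]
  constructor
  · refine le_inf ?_ ?_
    · refine hPxm Pxy hPxyp fun h => hPxyn ?_
      rw [key]; exact Pxy.mul_mem_right _ h
    · refine hPym Pxy hPxyp fun h => hPxyn ?_
      rw [key]; exact Pxy.mul_mem_left _ h
  · intro Q hQ hQle
    refine hPxym Q hQ fun h => ?_
    rw [key] at h
    rcases hQ.mem_or_mem h with h' | h'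
    · exact hPxn (hQle.trans inf_le_left h')
    · exact hPyn (hQle.trans inf_le_right h')
end

section
/- Let D be an integral domain and E the set of its Egyptian elements. If every nonzero prime ideal of D meets E, then D is Egyptian. More generally, if all but finitely many prime ideals of D meet E, then D is Egyptian. -/
set_option linter.unusedSectionVars false
set_option linter.unusedVariables false
set_option maxHeartbeats 1000000

/-- An integral domain is Egyptian if all its nonzero elements are Egyptian. -/
def EgyptianDomain (D F : Type*) [CommRing D] [Field F] [Algebra D F] : Prop :=
  ∀ x : D, x ≠ 0 → IsEgyptian D F (algebraMap D F x)

section Aux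

lemma exists_unit_aux {R : Type*} [CommRing R] [IsDomain R]
    (hfin : {p : Ideal R | p.IsPrime}.Finite) {x : R} (hxu : ¬ IsUnit x) :
    ∃ t : R, t ≠ 0 ∧ IsUnit (x * t - 1) := by
  have hPfin : {p : Ideal R | p.IsPrime ∧ p ≠ ⊥}.Finite := hfin.subset fun p hp => hp.1
  have hch : ∀ p ∈ hPfin.toFinset, ∃ a, a ∈ p ∧ a ≠ (0 : R) := by
    intro p hp
    rw [Set.Finite.mem_toFinset] at hp
    obtain ⟨a, ha, ha0⟩ := (Submodule.ne_bot_iff p).mp hp.2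
    exact ⟨a, ha, ha0⟩
  choose! g hg1 hg2 using hch
  set t : R := ∏ p ∈ hPfin.toFinset, g p with ht
  have ht0 : t ≠ 0 := Finset.prod_ne_zero_iff.mpr hg2
  have htmem : ∀ p ∈ hPfin.toFinset, t ∈ p := by
    intro p hp
    obtain ⟨c, hc⟩ := Finset.dvd_prod_of_mem g hp
    rw [ht, hc]
    exact Ideal.mul_mem_right _ _ (hg1 p hp)
  refine ⟨t, ht0, ?_⟩
  by_contra h
  obtain ⟨m, hm, hmem⟩ := exists_max_ideal_of_mem_nonunits h
  by_cases hb : m = ⊥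
  · rw [hb, Ideal.mem_bot, sub_eq_zero] at hmem
    exact hxu (IsUnit.of_mul_eq_one _ hmem)
  · have hmP : m ∈ hPfin.toFinset := by
      rw [Set.Finite.mem_toFinset]; exact ⟨hm.isPrime, hb⟩
    have h1 : (1 : R) ∈ m := by
      have := m.sub_mem (Ideal.mul_mem_left m x (htmem m hmP)) hmem
      simpa using this
    exact hm.ne_top (Ideal.eq_top_of_isUnit_mem m h1 isUnit_one)

variable {D F : Type*} [CommRing D] [IsDomain D] [Field F] [Algebra D F] [IsFractionRing D F]

lemma egy_add {x y : F} (hx : IsEgyptian D F x) (hy : IsEgyptian D F y) :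
    IsEgyptian D F (x + y) := by
  obtain ⟨n, f, hn, hf, rfl⟩ := hx
  obtain ⟨m, g, hm, hg, rfl⟩ := hy
  refine ⟨n + m, Fin.append f g, by omega, ?_, ?_⟩
  · intro i
    refine Fin.addCases (fun i => by simp [hf i]) (fun i => by simp [hg i]) i
  · rw [Fin.sum_univ_add]
    simp [Fin.append_left, Fin.append_right]

lemma egy_mul {x y : F} (hx : IsEgyptian D F x) (hy : IsEgyptian D F y) :
    IsEgyptian D F (x * y) := by
  obtain ⟨n, f, hn, hf, rfl⟩ := hx
  obtain ⟨m, g, hm, hg, rfl⟩ := hy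
  refine ⟨n * m, fun k => f (finProdFinEquiv.symm k).1 * g (finProdFinEquiv.symm k).2,
    Nat.mul_pos hn hm, fun k => mul_ne_zero (hf _) (hg _), ?_⟩
  rw [Finset.sum_mul_sum, ← Equiv.sum_comp finProdFinEquiv
    (fun k => (algebraMap D F (f (finProdFinEquiv.symm k).1 * g (finProdFinEquiv.symm k).2))⁻¹)]
  rw [← Finset.sum_product', ← Finset.univ_product_univ]
  refine Finset.sum_congr rfl (fun p _ => ?_)
  simp [map_mul, mul_inv, mul_comm]

lemma egy_one : IsEgyptian D F 1 := ⟨1, fun _ => 1, one_pos, fun _ => one_ne_zero, by simp⟩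

lemma egy_inv (d : D) (hd : d ≠ 0) : IsEgyptian D F (algebraMap D F d)⁻¹ :=
  ⟨1, fun _ => d, one_pos, fun _ => hd, by simp⟩

/-- The submonoid of nonzero Egyptian elements. -/
def egySubmonoid (D F : Type*) [CommRing D] [IsDomain D] [Field F] [Algebra D F]
    [IsFractionRing D F] : Submonoid D where
  carrier := {e | e ≠ 0 ∧ IsEgyptian D F (algebraMap D F e)}
  one_mem' := ⟨one_ne_zero, by rw [map_one]; exact egy_one⟩
  mul_mem' := fun ha hb => ⟨mul_ne_zero ha.1 hb.1, by rw [map_mul]; exact egy_mul ha.2 hb.2⟩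

/-- The localization of `D` at the Egyptian elements, inside `F`. -/
def egyLoc (D F : Type*) [CommRing D] [IsDomain D] [Field F] [Algebra D F]
    [IsFractionRing D F] : Subalgebra D F where
  carrier := {y | ∃ e ∈ egySubmonoid D F, ∃ d : D,
    y * algebraMap D F e = algebraMap D F d}
  algebraMap_mem' := fun d => ⟨1, one_mem _, d, by simp⟩
  add_mem' := by
    rintro y z ⟨e, he, d, hd⟩ ⟨e', he', d', hd'⟩
    refine ⟨e * e', mul_mem he he', d * e' + d' * e, ?_⟩
    rw [map_mul, map_add, map_mul, map_mul]
    rw [← hd, ← hd']; ring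
  mul_mem' := by
    rintro y z ⟨e, he, d, hd⟩ ⟨e', he', d', hd'⟩
    refine ⟨e * e', mul_mem he he', d * d', ?_⟩
    rw [map_mul, map_mul, ← hd, ← hd']; ring

lemma algebraMap_injective' : Function.Injective (algebraMap D F) :=
  IsFractionRing.injective D F

lemma coe_ne_zero' {e : D} (he : e ≠ 0) : algebraMap D F e ≠ 0 := fun h =>
  he (algebraMap_injective' (D := D) (F := F) (by rw [h, map_zero]))

instance : IsLocalization (egySubmonoid D F) (egyLoc D F) := by
  refine ⟨⟨?_, ?_, ?_⟩⟩
  · rintro ⟨e, he⟩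
    refine IsUnit.of_mul_eq_one ⟨(algebraMap D F e)⁻¹, ⟨e, he, 1, ?_⟩⟩ ?_
    · rw [inv_mul_cancel₀ (coe_ne_zero' he.1), map_one]
    · ext
      push_cast
      exact mul_inv_cancel₀ (coe_ne_zero' he.1)
  · rintro ⟨y, e, he, d, hd⟩
    refine ⟨⟨d, ⟨e, he⟩⟩, ?_⟩
    ext
    push_cast
    exact hd
  · intro x y h
    refine ⟨1, ?_⟩
    have : algebraMap D F x = algebraMap D F y := congrArg Subtype.val h
    simpa using algebraMap_injective' this

lemma egyLoc_coe_algebraMap (d : D) :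
    ((algebraMap D (egyLoc D F) d : egyLoc D F) : F) = algebraMap D F d := rfl

/-- The reciprocal of a nonzero element of the localization is Egyptian. -/
lemma egy_inv_loc (a : egyLoc D F) (ha : (a : F) ≠ 0) : IsEgyptian D F ((a : F))⁻¹ := by
  obtain ⟨e, he, d, hd⟩ := a.2
  have heF : algebraMap D F e ≠ 0 := coe_ne_zero' he.1
  have hdF : algebraMap D F d ≠ 0 := by rw [← hd]; exact mul_ne_zero ha heF
  have hdD : d ≠ 0 := fun h => hdF (by rw [h, map_zero])
  have key : ((a : F))⁻¹ = algebraMap D F e * (algebraMap D F d)⁻¹ := by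
    rw [← hd, mul_inv]
    field_simp
  rw [key]
  exact egy_mul he.2 (egy_inv d hdD)

lemma egy_main (hfin : ({p : Ideal D | p.IsPrime ∧
      ¬ ∃ x ∈ p, x ≠ 0 ∧ IsEgyptian D F (algebraMap D F x)}.Finite)) :
    EgyptianDomain D F := by
  have h1 : {p : Ideal D | p.IsPrime ∧
      Disjoint ((egySubmonoid D F : Set D)) (p : Set D)}.Finite := by
    refine hfin.subset ?_
    rintro p ⟨hp, hdisj⟩
    refine ⟨hp, ?_⟩
    rintro ⟨x, hxp, hx0, hxe⟩
    exact hdisj.ne_of_mem (⟨hx0, hxe⟩ : x ∈ (egySubmonoid D F : Set D)) hxp rfl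
  haveI : Finite {p : Ideal D // p.IsPrime ∧
      Disjoint ((egySubmonoid D F : Set D)) (p : Set D)} := h1.to_subtype
  haveI : Finite {p : Ideal (egyLoc D F) // p.IsPrime} :=
    Finite.of_equiv _ (IsLocalization.orderIsoOfPrime (egySubmonoid D F) (egyLoc D F)).toEquiv.symm
  have hfinA : {p : Ideal (egyLoc D F) | p.IsPrime}.Finite := Set.finite_coe_iff.mp this
  intro x hx
  set A := egyLoc D F with hA
  set xA : A := algebraMap D A x with hxAdef
  have hxF : ((xA : F)) = algebraMap D F x := rfl
  have hxA0 : (xA : F) ≠ 0 := by rw [hxF]; exact coe_ne_zero' hx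
  by_cases hu : IsUnit xA
  · obtain ⟨u, hu⟩ := hu
    have h2 : ((u⁻¹ : Aˣ) : A) * xA = 1 := by rw [← hu]; exact u.inv_mul
    have h3 : (((u⁻¹ : Aˣ) : A) : F) * (xA : F) = 1 := by
      have := Subtype.ext_iff.mp h2
      push_cast at this
      exact this
    have hw0 : (((u⁻¹ : Aˣ) : A) : F) ≠ 0 := fun h =>
      Units.ne_zero (u⁻¹) (Subtype.ext h)
    have h4 : algebraMap D F x = ((((u⁻¹ : Aˣ) : A) : F))⁻¹ := by
      rw [← hxF]
      exact eq_inv_of_mul_eq_one_left (by rw [mul_comm]; exact h3)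
    rw [h4]
    exact egy_inv_loc _ hw0
  · obtain ⟨t, ht0, htu⟩ := exists_unit_aux hfinA hu
    obtain ⟨v, hv⟩ := htu
    have htF : ((t : F)) ≠ 0 := fun h => ht0 (Subtype.ext h)
    have hvF : ((v : A) : F) ≠ 0 := fun h => Units.ne_zero v (Subtype.ext h)
    have hwF : (((v⁻¹ : Aˣ) : A) : F) ≠ 0 := fun h => Units.ne_zero (v⁻¹) (Subtype.ext h)
    have hvinv : ((v : A) : F) * (((v⁻¹ : Aˣ) : A) : F) = 1 := by
      have := Subtype.ext_iff.mp (congrArg (Units.val) (mul_inv_cancel v) : ((v * v⁻¹ : Aˣ) : A) = ((1 : Aˣ) : A))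
      push_cast at this
      exact this
    have heq : (xA : F) * (t : F) = ((v : A) : F) + 1 := by
      have h5 : xA * t = (v : A) + 1 := by rw [hv]; ring
      have := Subtype.ext_iff.mp h5
      push_cast at this
      exact this
    have w_eq : (((v⁻¹ : Aˣ) : A) : F) = (((v : A) : F))⁻¹ :=
      eq_inv_of_mul_eq_one_left (by rw [mul_comm]; exact hvinv)
    have key : algebraMap D F x = (((t * ((v⁻¹ : Aˣ) : A) : A) : F))⁻¹ + (((t : A) : F))⁻¹ := by
      have hcoe : (((t * ((v⁻¹ : Aˣ) : A) : A) : F)) = (t : F) * (((v⁻¹ : Aˣ) : A) : F) := by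
        push_cast; ring
      rw [hcoe, ← hxF, mul_inv, w_eq, inv_inv]
      field_simp
      linear_combination heq
    rw [key]
    exact egy_add (egy_inv_loc _ (by push_cast; exact mul_ne_zero htF hwF))
      (egy_inv_loc _ htF)

end Aux

/-- If every nonzero prime ideal of `D` meets the set `E` of Egyptian elements, then `D`
is Egyptian; more generally, if all but finitely many primes of `D` meet `E`, then `D`
is Egyptian. -/
theorem stmt9 (D F : Type*) [CommRing D] [IsDomain D] [Field F] [Algebra D F]
    [IsFractionRing D F] :
    ((∀ p : Ideal D, p.IsPrime → p ≠ ⊥ →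
        ∃ x ∈ p, x ≠ 0 ∧ IsEgyptian D F (algebraMap D F x)) → EgyptianDomain D F) ∧
    (({p : Ideal D | p.IsPrime ∧
        ¬ ∃ x ∈ p, x ≠ 0 ∧ IsEgyptian D F (algebraMap D F x)}.Finite) →
      EgyptianDomain D F) := by
  constructor
  · intro h
    apply egy_main
    refine (Set.finite_singleton (⊥ : Ideal D)).subset ?_
    rintro p ⟨hp, hne⟩
    simp only [Set.mem_singleton_iff]
    by_contra hb
    exact hne (h p hp hb)
  · exact egy_main
end

section
/- Let D be an integral domain containing a field K, and let x be an element of D not in K with x transcendental over K. Setting S = K[x] \ {0}, one has R(S^{-1}D) = R(D)[x] = R(D[x^{-1}]), where all rings are viewed inside the quotient field of D. -/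
set_option maxHeartbeats 1000000


theorem recipSub_mono {F : Type*} [Field F] {A B : Subring F} (h : A ≤ B) :
    recipSub A ≤ recipSub B :=
  Subring.closure_mono fun y ⟨a, ha, h0, hy⟩ => ⟨a, h ha, h0, hy⟩

theorem inv_mem_recipSub {F : Type*} [Field F] {A : Subring F} {a : F}
    (ha : a ∈ A) (h0 : a ≠ 0) : a⁻¹ ∈ recipSub A :=
  Subring.subset_closure ⟨a, ha, h0, rfl⟩

/-- Let `D` be an integral domain containing a field `K`, and `x ∈ D \ K` transcendental
over `K`. Setting `S = K[x] \ {0}`, one has `R(S⁻¹D) = R(D)[x] = R(D[x⁻¹])`, all rings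
being viewed inside the quotient field of `D`. -/
theorem stmt10 (K D F : Type*) [Field K] [CommRing D] [IsDomain D] [Algebra K D]
    [Field F] [Algebra D F] [IsFractionRing D F] [Algebra K F] [IsScalarTower K D F]
    (x : D) (hxK : x ∉ (algebraMap K D).range) (htr : Transcendental K x) :
    recipSub (Subring.closure (Set.range (algebraMap D F) ∪
        {y : F | ∃ s : D, s ∈ Algebra.adjoin K ({x} : Set D) ∧ s ≠ 0 ∧
          y = (algebraMap D F s)⁻¹})) =
      Subring.closure (↑(recipSub ((algebraMap D F).range)) ∪ {algebraMap D F x}) ∧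
    Subring.closure (↑(recipSub ((algebraMap D F).range)) ∪ {algebraMap D F x}) =
      recipSub (Subring.closure (Set.range (algebraMap D F) ∪
        {(algebraMap D F x)⁻¹})) := by
  set φ := algebraMap D F with hφ
  have hinj : Function.Injective φ := IsFractionRing.injective D F
  have hne : ∀ {d : D}, d ≠ 0 → φ d ≠ 0 := fun {d} hd =>
    (map_ne_zero_iff φ hinj).mpr hd
  have hx0 : x ≠ 0 := fun h => hxK ⟨0, by simp [h]⟩
  have hxadj : x ∈ Algebra.adjoin K ({x} : Set D) :=
    Algebra.subset_adjoin rfl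
  set A₁ : Subring F := Subring.closure (Set.range φ ∪
      {y : F | ∃ s : D, s ∈ Algebra.adjoin K ({x} : Set D) ∧ s ≠ 0 ∧
        y = (φ s)⁻¹}) with hA₁
  set A₂ : Subring F := Subring.closure (Set.range φ ∪ {(φ x)⁻¹}) with hA₂
  set T : Subring F := Subring.closure (↑(recipSub φ.range) ∪ {φ x}) with hT
  -- every element of the localization A₁ has the form φ d * (φ s)⁻¹
  have key : ∀ u ∈ A₁, ∃ d s : D, s ∈ Algebra.adjoin K ({x} : Set D) ∧ s ≠ 0 ∧
      u = φ d * (φ s)⁻¹ := by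
    intro u hu
    induction hu using Subring.closure_induction with
    | mem y hy =>
      rcases hy with ⟨d, rfl⟩ | ⟨s, hs, hs0, rfl⟩
      · exact ⟨d, 1, Subalgebra.one_mem _, one_ne_zero, by simp⟩
      · exact ⟨1, s, hs, hs0, by simp⟩
    | zero => exact ⟨0, 1, Subalgebra.one_mem _, one_ne_zero, by simp⟩
    | one => exact ⟨1, 1, Subalgebra.one_mem _, one_ne_zero, by simp⟩
    | add a b _ _ ha hb =>
      obtain ⟨d₁, s₁, hs₁, h₁0, rfl⟩ := ha
      obtain ⟨d₂, s₂, hs₂, h₂0, rfl⟩ := hb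
      refine ⟨d₁ * s₂ + d₂ * s₁, s₁ * s₂, Subalgebra.mul_mem _ hs₁ hs₂,
        mul_ne_zero h₁0 h₂0, ?_⟩
      have e₁ := hne h₁0
      have e₂ := hne h₂0
      field_simp
      simp only [map_add, map_mul]; ring
    | neg a _ ha =>
      obtain ⟨d, s, hs, h0, rfl⟩ := ha
      exact ⟨-d, s, hs, h0, by simp [neg_mul]⟩
    | mul a b _ _ ha hb =>
      obtain ⟨d₁, s₁, hs₁, h₁0, rfl⟩ := ha
      obtain ⟨d₂, s₂, hs₂, h₂0, rfl⟩ := hb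
      refine ⟨d₁ * d₂, s₁ * s₂, Subalgebra.mul_mem _ hs₁ hs₂,
        mul_ne_zero h₁0 h₂0, ?_⟩
      simp only [map_mul, mul_inv]
      ring
  -- recipSub of range is inside T
  have hRT : (recipSub φ.range : Set F) ⊆ (T : Set F) := fun y hy =>
    Subring.subset_closure (Or.inl hy)
  have hxT : φ x ∈ T := Subring.subset_closure (Or.inr rfl)
  -- φ s ∈ T for s in the adjoin
  have hadjT : ∀ s : D, s ∈ Algebra.adjoin K ({x} : Set D) → φ s ∈ T := by
    intro s hs
    induction hs using Algebra.adjoin_induction with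
    | mem y hy =>
      rcases hy with rfl
      exact hxT
    | algebraMap c =>
      by_cases hc : c = 0
      · rw [hc, map_zero, map_zero]; exact zero_mem T
      · have h1 : φ (algebraMap K D c) = (φ (algebraMap K D c⁻¹))⁻¹ := by
          rw [hφ, ← IsScalarTower.algebraMap_apply, ← IsScalarTower.algebraMap_apply,
            map_inv₀, inv_inv]
        rw [h1]
        exact hRT (inv_mem_recipSub ⟨algebraMap K D c⁻¹, rfl⟩
          (hne ((map_ne_zero_iff _ (algebraMap K D).injective).mpr
            (inv_ne_zero hc))))
    | add a b _ _ ha hb => rw [map_add]; exact add_mem ha hb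
    | mul a b _ _ ha hb => rw [map_mul]; exact mul_mem ha hb
  -- inclusion (i): recipSub A₁ ≤ T
  have h1 : recipSub A₁ ≤ T := by
    rw [recipSub, Subring.closure_le]
    rintro y ⟨a, ha, ha0, rfl⟩
    obtain ⟨d, s, hs, hs0, rfl⟩ := key a ha
    have hd0 : d ≠ 0 := by
      rintro rfl
      simp at ha0
    rw [mul_inv, inv_inv, mul_comm]
    exact mul_mem (hadjT s hs)
      (hRT (inv_mem_recipSub ⟨d, rfl⟩ (hne hd0)))
  -- inclusion (ii): T ≤ recipSub A₂
  have h2 : T ≤ recipSub A₂ := by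
    rw [hT, Subring.closure_le]
    have hrange : φ.range ≤ A₂ := by
      intro z hz
      obtain ⟨z', rfl⟩ := hz
      exact Subring.subset_closure (Or.inl ⟨z', rfl⟩)
    rintro y (hy | rfl)
    · exact recipSub_mono hrange hy
    · have : φ x = ((φ x)⁻¹)⁻¹ := (inv_inv _).symm
      rw [this]
      exact inv_mem_recipSub (Subring.subset_closure (Or.inr rfl))
        (inv_ne_zero (hne hx0))
  -- inclusion (iii): recipSub A₂ ≤ recipSub A₁
  have h3 : recipSub A₂ ≤ recipSub A₁ := by
    apply recipSub_mono
    rw [hA₂, Subring.closure_le]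
    rintro y (hy | rfl)
    · exact Subring.subset_closure (Or.inl hy)
    · exact Subring.subset_closure (Or.inr ⟨x, hxadj, hx0, rfl⟩)
  exact ⟨le_antisymm h1 (h2.trans h3), le_antisymm h2 (h3.trans h1)⟩
end

section
/- If the reciprocal complement R(D) of an integral domain D has finite Krull dimension, then every prime ideal p of R(D) equals p_x for some nonzero x in D (where p_x is the unique prime maximal with respect to not containing 1/x). In particular, R(D) has nonzero pseudoradical, i.e., the intersection of all nonzero prime ideals of R(D) is nonzero. -/
namespace Stmt13
set_option linter.unusedSectionVars false

variable {D F : Type*} [CommRing D] [IsDomain D] [Field F] [Algebra D F] [IsFractionRing D F]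

lemma phi_ne {d : D} (hd : d ≠ 0) : algebraMap D F d ≠ 0 := fun h =>
  hd <| IsFractionRing.injective D F (by rw [h, map_zero])

lemma rec_mem {d : D} (hd : d ≠ 0) : (algebraMap D F d)⁻¹ ∈ recipCompl D F :=
  Subring.subset_closure ⟨d, hd, rfl⟩

/-- A signed unit fraction. -/
def rVal (pr : D × Bool) : F :=
  if pr.2 then (algebraMap D F pr.1)⁻¹ else -(algebraMap D F pr.1)⁻¹

def rSum (l : List (D × Bool)) : F := (l.map (rVal (F := F))).sum

def rDen (l : List (D × Bool)) : D := (l.map Prod.fst).prod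

def rNum : List (D × Bool) → D
  | [] => 0
  | pr :: t => (if pr.2 then rDen t else -rDen t) + pr.1 * rNum t

def ROK (l : List (D × Bool)) : Prop := ∀ pr ∈ l, pr.1 ≠ 0

lemma rok_tail {pr : D × Bool} {t : List (D × Bool)} (h : ROK (pr :: t)) : ROK t :=
  fun q hq => h q (List.mem_cons_of_mem _ hq)

lemma rok_head {pr : D × Bool} {t : List (D × Bool)} (h : ROK (pr :: t)) : pr.1 ≠ 0 :=
  h pr (List.mem_cons_self)

lemma rDen_cons (pr : D × Bool) (t : List (D × Bool)) : rDen (pr :: t) = pr.1 * rDen t := by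
  simp [rDen]

lemma rSum_cons (pr : D × Bool) (t : List (D × Bool)) :
    rSum (F := F) (pr :: t) = rVal pr + rSum t := by simp [rSum]

lemma rDen_ne {l : List (D × Bool)} (h : ROK l) : rDen l ≠ 0 := by
  induction l with
  | nil => simp [rDen]
  | cons pr t ih => rw [rDen_cons]; exact mul_ne_zero (rok_head h) (ih (rok_tail h))

lemma rSum_spec {l : List (D × Bool)} (h : ROK l) :
    rSum l * algebraMap D F (rDen l) = algebraMap D F (rNum l) := by
  induction l with
  | nil => simp [rSum, rDen, rNum]
  | cons pr t ih =>
    have h1 : (algebraMap D F pr.1) ≠ 0 := phi_ne (rok_head h)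
    have ht := ih (rok_tail h)
    have hval : rVal pr * algebraMap D F pr.1 = if pr.2 then (1:F) else -1 := by
      rcases pr with ⟨d, b⟩
      cases b <;> simp [rVal, inv_mul_cancel₀ h1]
    calc rSum (pr :: t) * algebraMap D F (rDen (pr :: t))
        = (rVal pr + rSum t) * (algebraMap D F pr.1 * algebraMap D F (rDen t)) := by
          rw [rSum_cons, rDen_cons, map_mul]
      _ = (rVal pr * algebraMap D F pr.1) * algebraMap D F (rDen t)
          + (rSum t * algebraMap D F (rDen t)) * algebraMap D F pr.1 := by ring
      _ = (if pr.2 then (1:F) else -1) * algebraMap D F (rDen t)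
          + algebraMap D F (rNum t) * algebraMap D F pr.1 := by rw [hval, ht]
      _ = algebraMap D F ((if pr.2 then rDen t else -rDen t) + pr.1 * rNum t) := by
          rcases pr with ⟨d, b⟩
          cases b <;> simp [map_add, map_mul, map_neg] <;> ring
      _ = algebraMap D F (rNum (pr :: t)) := rfl

lemma rVal_mem {pr : D × Bool} (h : pr.1 ≠ 0) : rVal pr ∈ recipCompl D F := by
  rcases pr with ⟨d, b⟩
  cases b <;> simp only [rVal] <;> first
    | exact rec_mem h
    | exact neg_mem (rec_mem h)

lemma rSum_mem {l : List (D × Bool)} (h : ROK l) : rSum l ∈ recipCompl D F := by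
  induction l with
  | nil => simpa [rSum] using zero_mem _
  | cons pr t ih => rw [rSum_cons]; exact add_mem (rVal_mem (rok_head h)) (ih (rok_tail h))

/-- Every element of the reciprocal complement is a finite sum of signed unit fractions. -/
lemma exists_rep {z : F} (hz : z ∈ recipCompl D F) :
    ∃ l : List (D × Bool), ROK l ∧ rSum l = z := by
  obtain ⟨L, hL, hsum⟩ := Subring.exists_list_of_mem_closure hz
  subst hsum
  clear hz
  induction L with
  | nil => exact ⟨[], fun pr h => absurd h List.not_mem_nil, by simp [rSum]⟩
  | cons t L ihL =>
    obtain ⟨l', hok', hsum'⟩ := ihL (fun u hu => hL u (List.mem_cons_of_mem _ hu))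
    have ht := hL t (List.mem_cons_self)
    -- convert the product list t into a single signed unit fraction
    have : ∃ d : D, d ≠ 0 ∧ ∃ b : Bool, t.prod = rVal (d, b) := by
      clear hL ihL hok' hsum'
      induction t with
      | nil => exact ⟨1, one_ne_zero, true, by simp [rVal]⟩
      | cons y t iht =>
        obtain ⟨d, hd, b, hprod⟩ := iht (fun u hu => ht u (List.mem_cons_of_mem _ hu))
        rcases ht y (List.mem_cons_self) with hy | hy
        · obtain ⟨e, he, rfl⟩ := hy
          refine ⟨e * d, mul_ne_zero he hd, b, ?_⟩
          rw [List.prod_cons, hprod]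
          cases b <;> simp [rVal, map_mul, mul_inv] <;> ring
        · refine ⟨d, hd, !b, ?_⟩
          rw [List.prod_cons, hprod, hy]
          cases b <;> simp [rVal]
    obtain ⟨d, hd, b, hprod⟩ := this
    refine ⟨(d, b) :: l', ?_, ?_⟩
    · intro pr hpr
      rcases List.mem_cons.mp hpr with rfl | hpr
      · exact hd
      · exact hok' pr hpr
    · rw [rSum_cons, hsum', List.map_cons, List.sum_cons, hprod]


/-! ### membership of field elements in ideals of the reciprocal complement -/

def memI (Q : Ideal (recipCompl D F)) (z : F) : Prop :=
  ∃ h : z ∈ recipCompl D F, (⟨z, h⟩ : recipCompl D F) ∈ Q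

lemma memI_iff {Q : Ideal (recipCompl D F)} {z : F} (hz : z ∈ recipCompl D F) :
    memI Q z ↔ (⟨z, hz⟩ : recipCompl D F) ∈ Q := by
  constructor
  · rintro ⟨h, hm⟩; exact hm
  · intro h; exact ⟨hz, h⟩

lemma memI_zero {Q : Ideal (recipCompl D F)} : memI Q 0 :=
  ⟨zero_mem _, Q.zero_mem⟩

lemma memI.add {Q : Ideal (recipCompl D F)} {a b : F} (ha : memI Q a) (hb : memI Q b) :
    memI Q (a + b) := by
  obtain ⟨h1, hm1⟩ := ha; obtain ⟨h2, hm2⟩ := hb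
  exact ⟨add_mem h1 h2, Q.add_mem hm1 hm2⟩

lemma memI.neg {Q : Ideal (recipCompl D F)} {a : F} (ha : memI Q a) : memI Q (-a) := by
  obtain ⟨h1, hm1⟩ := ha
  exact ⟨neg_mem h1, neg_mem hm1⟩

lemma memI.sub {Q : Ideal (recipCompl D F)} {a b : F} (ha : memI Q a) (hb : memI Q b) :
    memI Q (a - b) := by
  rw [sub_eq_add_neg]; exact ha.add hb.neg

lemma memI.mul_left {Q : Ideal (recipCompl D F)} {w a : F} (hw : w ∈ recipCompl D F)
    (ha : memI Q a) : memI Q (w * a) := by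
  obtain ⟨h1, hm1⟩ := ha
  exact ⟨mul_mem hw h1, Q.mul_mem_left ⟨w, hw⟩ hm1⟩

lemma memI.mul_right {Q : Ideal (recipCompl D F)} {w a : F} (hw : w ∈ recipCompl D F)
    (ha : memI Q a) : memI Q (a * w) := by
  rw [mul_comm]; exact ha.mul_left hw

lemma memI_one_false {Q : Ideal (recipCompl D F)} (hQ : Q.IsPrime) (h : memI Q 1) : False := by
  rw [memI_iff (one_mem _)] at h
  exact hQ.ne_top (Q.eq_top_iff_one.mpr h)

lemma memI_mul_split {Q : Ideal (recipCompl D F)} (hQ : Q.IsPrime) {z w : F}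
    (hz : z ∈ recipCompl D F) (hw : w ∈ recipCompl D F) (h : memI Q (z * w)) :
    memI Q z ∨ memI Q w := by
  rw [memI_iff (mul_mem hz hw)] at h
  have : (⟨z * w, mul_mem hz hw⟩ : recipCompl D F) = ⟨z, hz⟩ * ⟨w, hw⟩ := rfl
  rw [this] at h
  rcases hQ.mem_or_mem h with h | h
  · exact Or.inl ⟨hz, h⟩
  · exact Or.inr ⟨hw, h⟩

lemma memI_rVal_iff {Q : Ideal (recipCompl D F)} {pr : D × Bool} (h : pr.1 ≠ 0) :
    memI Q (rVal pr) ↔ memI Q ((algebraMap D F pr.1)⁻¹) := by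
  rcases pr with ⟨d, b⟩
  cases b
  · simp only [rVal]
    constructor
    · intro hm; simpa using hm.neg
    · intro hm; exact hm.neg
  · simp [rVal]

/-- powers of an avoided reciprocal are avoided -/
lemma pow_notmem {Q : Ideal (recipCompl D F)} (hQ : Q.IsPrime) {x : D} (hx : x ≠ 0)
    (hxQ : ¬ memI Q ((algebraMap D F x)⁻¹)) : ∀ k : ℕ, ¬ memI Q (((algebraMap D F x)⁻¹) ^ k) := by
  intro k
  induction k with
  | zero => intro h; rw [pow_zero] at h; exact memI_one_false hQ h
  | succ k ih =>
    intro h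
    rw [pow_succ] at h
    rcases memI_mul_split hQ (pow_mem (rec_mem hx) k) (rec_mem hx) h with h | h
    · exact ih h
    · exact hxQ h

/-- if a prime contains the reciprocal of a denominator product, it contains the reciprocal
of one of the factors -/
lemma den_split {Q : Ideal (recipCompl D F)} (hQ : Q.IsPrime) :
    ∀ l : List (D × Bool), ROK l → memI Q ((algebraMap D F (rDen l))⁻¹) →
      ∃ pr ∈ l, memI Q ((algebraMap D F pr.1)⁻¹) := by
  intro l
  induction l with
  | nil =>
    intro _ h
    exfalso
    apply memI_one_false hQ
    simpa [rDen] using h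
  | cons pr t ih =>
    intro hok h
    rw [rDen_cons, map_mul, mul_inv] at h
    rcases memI_mul_split hQ (rec_mem (rok_head hok))
      (rec_mem (rDen_ne (rok_tail hok))) h with h | h
    · exact ⟨pr, List.mem_cons_self, h⟩
    · obtain ⟨q, hq, hmem⟩ := ih (rok_tail hok) h
      exact ⟨q, List.mem_cons_of_mem _ hq, hmem⟩

lemma memI_rSum {Q : Ideal (recipCompl D F)} {l : List (D × Bool)} (hok : ROK l)
    (h : ∀ pr ∈ l, memI Q ((algebraMap D F pr.1)⁻¹)) : memI Q (rSum l) := by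
  induction l with
  | nil => simpa [rSum] using memI_zero
  | cons pr t ih =>
    rw [rSum_cons]
    exact ((memI_rVal_iff (rok_head hok)).mpr (h pr (List.mem_cons_self))).add
      (ih (rok_tail hok) (fun q hq => h q (List.mem_cons_of_mem _ hq)))

/-- From a nonzero member of a prime with a given representation, the prime contains the
reciprocal of the total denominator. -/
lemma memI_den_of_memI {Q : Ideal (recipCompl D F)} {l : List (D × Bool)} (hok : ROK l)
    (hz : memI Q (rSum l)) (hne : rSum (F := F) l ≠ 0) :
    memI Q ((algebraMap D F (rDen l))⁻¹) := by
  have hden := rDen_ne hok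
  have hkey : rSum l * algebraMap D F (rDen l) = algebraMap D F (rNum l) := rSum_spec hok
  have hnum : rNum l ≠ 0 := by
    intro h0
    rw [h0, map_zero] at hkey
    exact hne ((mul_eq_zero.mp hkey).resolve_right (phi_ne hden))
  have key2 : rSum l * (algebraMap D F (rNum l))⁻¹ = (algebraMap D F (rDen l))⁻¹ := by
    rw [← hkey, mul_inv, ← mul_assoc, mul_inv_cancel₀ hne, one_mul]
  rw [← key2]
  exact hz.mul_right (rec_mem hnum)


/-- peel one occurrence of `pr` off the list -/
lemma peel {l : List (D × Bool)} {pr : D × Bool} (h : pr ∈ l) :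
    ∃ l' : List (D × Bool), l'.length + 1 = l.length ∧ (∀ q ∈ l', q ∈ l) ∧
      rSum (F := F) l = rVal pr + rSum l' := by
  obtain ⟨s, t, rfl⟩ := List.append_of_mem h
  refine ⟨s ++ t, by simp [List.length_append]; omega, ?_, ?_⟩
  · intro q hq
    rcases List.mem_append.mp hq with hq | hq
    · exact List.mem_append.mpr (Or.inl hq)
    · exact List.mem_append.mpr (Or.inr (List.mem_cons_of_mem _ hq))
  · simp only [rSum, List.map_append, List.sum_append, List.map_cons, List.sum_cons]
    ring

/-- Every member of a prime ideal has a representation all of whose unit fractions lie in the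
prime ideal. -/
lemma good_rep {Q : Ideal (recipCompl D F)} (hQ : Q.IsPrime) :
    ∀ (n : ℕ) (l : List (D × Bool)), l.length ≤ n → ROK l → memI Q (rSum l) →
    ∃ l' : List (D × Bool), ROK l' ∧ rSum (F := F) l' = rSum l ∧
      ∀ pr ∈ l', memI Q ((algebraMap D F pr.1)⁻¹) := by
  intro n
  induction n with
  | zero =>
    intro l hlen _ _
    rw [List.length_eq_zero_iff.mp (Nat.le_zero.mp hlen)]
    exact ⟨[], fun pr h => absurd h List.not_mem_nil, rfl, fun pr h => absurd h List.not_mem_nil⟩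
  | succ n ih =>
    intro l hlen hok hz
    by_cases h0 : rSum (F := F) l = 0
    · exact ⟨[], fun pr h => absurd h List.not_mem_nil, by simpa [rSum] using h0.symm,
        fun pr h => absurd h List.not_mem_nil⟩
    · have hden := memI_den_of_memI hok hz h0
      obtain ⟨pr, hpr, hmem⟩ := den_split hQ l hok hden
      have h1 : pr.1 ≠ 0 := hok pr hpr
      obtain ⟨l₀, hlen₀, hsub₀, herase⟩ := peel (F := F) hpr
      have hz' : memI Q (rSum l₀) := by
        have : rSum (F := F) l₀ = rSum l - rVal pr := by rw [herase]; ring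
        rw [this]
        exact hz.sub ((memI_rVal_iff h1).mpr hmem)
      have hlen' : l₀.length ≤ n := by omega
      obtain ⟨l', hok', hsum', hall'⟩ := ih l₀ hlen' (fun q hq => hok q (hsub₀ q hq)) hz'
      refine ⟨pr :: l', ?_, ?_, ?_⟩
      · intro q hq
        rcases List.mem_cons.mp hq with rfl | hq
        · exact h1
        · exact hok' q hq
      · rw [rSum_cons, hsum', herase]
      · intro q hq
        rcases List.mem_cons.mp hq with rfl | hq
        · exact hmem
        · exact hall' q hq

/-- If every reciprocal in the prime `q` lies in the ideal `p`, then `q ≤ p` (on the level of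
field elements). -/
lemma recip_transfer {q p : Ideal (recipCompl D F)} (hq : q.IsPrime)
    (h : ∀ d : D, d ≠ 0 → memI q ((algebraMap D F d)⁻¹) → memI p ((algebraMap D F d)⁻¹)) :
    ∀ z : F, memI q z → memI p z := by
  intro z hz
  have hzRC : z ∈ recipCompl D F := hz.choose
  obtain ⟨l, hok, hsum⟩ := exists_rep hzRC
  rw [← hsum] at hz ⊢
  obtain ⟨l', hok', hsum', hall'⟩ := good_rep hq l.length l le_rfl hok hz
  rw [← hsum']
  exact memI_rSum hok' (fun pr hpr => h pr.1 (hok' pr hpr) (hall' pr hpr))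

/-- The core lemma: if `Q₁, Q₂` are primes avoiding `1/x`, then no power of `1/x` is a sum of
an element of `Q₁` (given by a representation with unit fractions in `Q₁`) and an element
of `Q₂`. -/
lemma core_ne {Q₁ Q₂ : Ideal (recipCompl D F)} (h₁ : Q₁.IsPrime) (h₂ : Q₂.IsPrime) {x : D}
    (hx : x ≠ 0) (a₁ : ¬ memI Q₁ ((algebraMap D F x)⁻¹))
    (a₂ : ¬ memI Q₂ ((algebraMap D F x)⁻¹)) (k : ℕ) :
    ∀ (n : ℕ) (l : List (D × Bool)), l.length ≤ n → ROK l →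
      (∀ pr ∈ l, memI Q₁ ((algebraMap D F pr.1)⁻¹)) →
      ∀ τ : F, memI Q₂ τ → ((algebraMap D F x)⁻¹) ^ k ≠ rSum l + τ := by
  intro n
  induction n with
  | zero =>
    intro l hlen _ _ τ hτ hE
    rw [List.length_eq_zero_iff.mp (Nat.le_zero.mp hlen)] at hE
    simp only [rSum, List.map_nil, List.sum_nil, zero_add] at hE
    rw [← hE] at hτ
    exact pow_notmem h₂ hx a₂ k hτ
  | succ n ih =>
    intro l hlen hok hQ1 τ hτ hE
    by_cases hA : rSum (F := F) l = ((algebraMap D F x)⁻¹) ^ k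
    · exact pow_notmem h₁ hx a₁ k (hA ▸ memI_rSum hok hQ1)
    · have hτ0 : τ ≠ 0 := by
        intro h0
        rw [h0, add_zero] at hE
        exact hA hE.symm
      have hden := rDen_ne hok
      have hkey : rSum l * algebraMap D F (rDen l) = algebraMap D F (rNum l) := rSum_spec hok
      set u₁ : D := rDen l - x ^ k * rNum l with hu₁def
      have hphixk : ((algebraMap D F x)⁻¹) ^ k = (algebraMap D F (x ^ k))⁻¹ := by
        rw [map_pow, inv_pow]
      have hxk : (x : D) ^ k ≠ 0 := pow_ne_zero k hx
      have hid : τ * algebraMap D F (x ^ k * rDen l) = algebraMap D F u₁ := by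
        have hτval : τ = ((algebraMap D F x)⁻¹) ^ k - rSum l := by rw [hE]; ring
        rw [hτval, hphixk, hu₁def, map_mul, map_sub, map_mul, sub_mul,
          ← mul_assoc, inv_mul_cancel₀ (phi_ne hxk), one_mul]
        rw [show rSum l * ((algebraMap D F) (x ^ k) * (algebraMap D F) (rDen l))
            = (rSum l * algebraMap D F (rDen l)) * algebraMap D F (x ^ k) by ring, hkey]
        ring
      have hu₁ : u₁ ≠ 0 := by
        intro h0
        rw [h0, map_zero, mul_eq_zero] at hid
        rcases hid with h | h
        · exact hτ0 h
        · exact phi_ne (mul_ne_zero hxk hden) h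
      have hrecip : memI Q₂ ((algebraMap D F (x ^ k * rDen l))⁻¹) := by
        have : (algebraMap D F (x ^ k * rDen l))⁻¹ = τ * (algebraMap D F u₁)⁻¹ := by
          rw [← hid, mul_inv, ← mul_assoc, mul_inv_cancel₀ hτ0, one_mul]
        rw [this]
        exact hτ.mul_right (rec_mem hu₁)
      rw [map_mul, mul_inv] at hrecip
      rcases memI_mul_split h₂ (rec_mem hxk) (rec_mem hden) hrecip with h | h
      · rw [← hphixk] at h
        exact pow_notmem h₂ hx a₂ k h
      · obtain ⟨pr, hpr, hmem⟩ := den_split h₂ l hok h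
        have h1 : pr.1 ≠ 0 := hok pr hpr
        obtain ⟨l₀, hlen₀, hsub₀, herase⟩ := peel (F := F) hpr
        have hlen' : l₀.length ≤ n := by omega
        refine ih l₀ hlen' (fun q hq => hok q (hsub₀ q hq))
          (fun q hq => hQ1 q (hsub₀ q hq)) (τ + rVal pr)
          (hτ.add ((memI_rVal_iff h1).mpr hmem)) ?_
        rw [hE, herase]
        ring


lemma recipElem_mem_iff {Q : Ideal (recipCompl D F)} {x : D} (hx : x ≠ 0) :
    recipElem D F x hx ∈ Q ↔ memI Q ((algebraMap D F x)⁻¹) :=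
  ((memI_iff (rec_mem hx)).trans (Iff.rfl)).symm

/-- Two primes avoiding `1/x` have a common prime extension avoiding `1/x`. -/
lemma exists_common_extension {Q₁ Q₂ : Ideal (recipCompl D F)} (h₁ : Q₁.IsPrime)
    (h₂ : Q₂.IsPrime) {x : D} (hx : x ≠ 0) (a₁ : ¬ memI Q₁ ((algebraMap D F x)⁻¹))
    (a₂ : ¬ memI Q₂ ((algebraMap D F x)⁻¹)) :
    ∃ Q₃ : Ideal (recipCompl D F), Q₃.IsPrime ∧ Q₁ ≤ Q₃ ∧ Q₂ ≤ Q₃ ∧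
      ¬ memI Q₃ ((algebraMap D F x)⁻¹) := by
  have hdisj : Disjoint ((Q₁ ⊔ Q₂ : Ideal (recipCompl D F)) : Set (recipCompl D F))
      ((Submonoid.powers (recipElem D F x hx)) : Set (recipCompl D F)) := by
    rw [Set.disjoint_left]
    rintro z hz ⟨k, hk⟩
    obtain ⟨a, ha, b, hb, hab⟩ := Submodule.mem_sup.mp hz
    have haI : memI Q₁ (a : F) := ⟨a.2, ha⟩
    obtain ⟨l, hok, hsum⟩ := exists_rep a.2
    rw [← hsum] at haI
    obtain ⟨l', hok', hsum', hall'⟩ := good_rep h₁ l.length l le_rfl hok haI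
    have hbI : memI Q₂ (b : F) := ⟨b.2, hb⟩
    refine core_ne h₁ h₂ hx a₁ a₂ k l'.length l' le_rfl hok' hall' (b : F) hbI ?_
    have hzval : (z : F) = ((algebraMap D F x)⁻¹) ^ k := by
      rw [← hk]
      push_cast
      rfl
    rw [← hzval, hsum', hsum]
    exact_mod_cast congrArg (Subtype.val) hab.symm
  obtain ⟨P, hP, hle, hPdisj⟩ :=
    Ideal.exists_le_prime_disjoint (Q₁ ⊔ Q₂) (Submonoid.powers (recipElem D F x hx)) hdisj
  refine ⟨P, hP, le_trans le_sup_left hle, le_trans le_sup_right hle, ?_⟩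
  rintro ⟨hmem, hm⟩
  have : recipElem D F x hx ∈ P := hm
  exact Set.disjoint_left.mp hPdisj this ⟨1, pow_one _⟩

/-! ### the canonical maximal prime avoiding `1/x` over a fixed prime `p` -/

def SFam (p : Ideal (recipCompl D F)) (x : D) : Set (Ideal (recipCompl D F)) :=
  {Q | Q.IsPrime ∧ p ≤ Q ∧ ¬ memI Q ((algebraMap D F x)⁻¹)}

noncomputable def PP (p : Ideal (recipCompl D F)) (x : D) : Ideal (recipCompl D F) :=
  sSup (SFam p x)

variable {p : Ideal (recipCompl D F)}

lemma SFam_self (hp : p.IsPrime) {x : D} (hxp : ¬ memI p ((algebraMap D F x)⁻¹)) :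
    p ∈ SFam p x := ⟨hp, le_rfl, hxp⟩

lemma SFam_directed {x : D} (hx : x ≠ 0) : DirectedOn (· ≤ ·) (SFam p x) := by
  rintro Q₁ ⟨h₁, hp₁, ha₁⟩ Q₂ ⟨h₂, hp₂, ha₂⟩
  obtain ⟨Q₃, h₃, hle₁, hle₂, ha₃⟩ := exists_common_extension h₁ h₂ hx ha₁ ha₂
  exact ⟨Q₃, ⟨h₃, le_trans hp₁ hle₁, ha₃⟩, hle₁, hle₂⟩

lemma mem_PP_iff (hp : p.IsPrime) {x : D} (hx : x ≠ 0)
    (hxp : ¬ memI p ((algebraMap D F x)⁻¹)) {z : recipCompl D F} :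
    z ∈ PP p x ↔ ∃ Q ∈ SFam p x, z ∈ Q :=
  Submodule.mem_sSup_of_directed ⟨p, SFam_self hp hxp⟩ (SFam_directed hx)

lemma PP_isPrime (hp : p.IsPrime) {x : D} (hx : x ≠ 0)
    (hxp : ¬ memI p ((algebraMap D F x)⁻¹)) : (PP p x).IsPrime := by
  constructor
  · intro htop
    have : (1 : recipCompl D F) ∈ PP p x := htop ▸ Submodule.mem_top
    obtain ⟨Q, hQ, hone⟩ := (mem_PP_iff hp hx hxp).mp this
    exact hQ.1.ne_top ((Ideal.eq_top_iff_one Q).mpr hone)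
  · intro a b hab
    obtain ⟨Q, hQ, hmem⟩ := (mem_PP_iff hp hx hxp).mp hab
    rcases hQ.1.mem_or_mem hmem with h | h
    · exact Or.inl ((le_sSup hQ) h)
    · exact Or.inr ((le_sSup hQ) h)

lemma PP_avoid (hp : p.IsPrime) {x : D} (hx : x ≠ 0)
    (hxp : ¬ memI p ((algebraMap D F x)⁻¹)) : ¬ memI (PP p x) ((algebraMap D F x)⁻¹) := by
  rintro ⟨h, hm⟩
  obtain ⟨Q, hQ, hmem⟩ := (mem_PP_iff hp hx hxp).mp hm
  exact hQ.2.2 ⟨h, hmem⟩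

lemma le_PP (hp : p.IsPrime) {x : D} (hx : x ≠ 0) (hxp : ¬ memI p ((algebraMap D F x)⁻¹))
    {Q : Ideal (recipCompl D F)} (hQ : Q.IsPrime) (hQx : ¬ memI Q ((algebraMap D F x)⁻¹)) :
    Q ≤ PP p x := by
  obtain ⟨Q₃, h₃, hle₁, hle₂, ha₃⟩ := exists_common_extension hQ hp hx hQx hxp
  exact le_trans hle₁ (le_sSup ⟨h₃, hle₂, ha₃⟩)

lemma p_le_PP (hp : p.IsPrime) {x : D} (hxp : ¬ memI p ((algebraMap D F x)⁻¹)) :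
    p ≤ PP p x := le_sSup (SFam_self hp hxp)

lemma avoid_mul {Q : Ideal (recipCompl D F)} {x y : D} (hy : y ≠ 0)
    (h : ¬ memI Q ((algebraMap D F (x * y))⁻¹)) : ¬ memI Q ((algebraMap D F x)⁻¹) := by
  intro hmem
  apply h
  rw [map_mul, mul_inv]
  exact hmem.mul_right (rec_mem hy)

lemma PP_mul_le_left {x y : D} (hy : y ≠ 0) : PP p (x * y) ≤ PP p x := by
  apply sSup_le_sSup
  rintro Q ⟨h1, h2, h3⟩
  exact ⟨h1, h2, avoid_mul hy h3⟩

lemma PP_mul_le_right {x y : D} (hx : x ≠ 0) : PP p (x * y) ≤ PP p y := by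
  rw [mul_comm]
  exact PP_mul_le_left hx

lemma avoid_of_prime_mul {Q : Ideal (recipCompl D F)} (hQ : Q.IsPrime) {x y : D} (hx : x ≠ 0)
    (hy : y ≠ 0) (h1 : ¬ memI Q ((algebraMap D F x)⁻¹)) (h2 : ¬ memI Q ((algebraMap D F y)⁻¹)) :
    ¬ memI Q ((algebraMap D F (x * y))⁻¹) := by
  intro h
  rw [map_mul, mul_inv] at h
  rcases memI_mul_split hQ (rec_mem hx) (rec_mem hy) h with h | h
  · exact h1 h
  · exact h2 h


lemma one_in_T (hp : p.IsPrime) : (1 : D) ≠ 0 ∧ ¬ memI p ((algebraMap D F (1 : D))⁻¹) := by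
  refine ⟨one_ne_zero, ?_⟩
  rw [map_one, inv_one]
  exact fun h => memI_one_false hp h

lemma exists_stable (hp : p.IsPrime) (hfin : ∃ n : ℕ, ringKrullDim (recipCompl D F) ≤ n) :
    ∃ x : D, (x ≠ 0 ∧ ¬ memI p ((algebraMap D F x)⁻¹)) ∧
      ∀ y : D, y ≠ 0 → ¬ memI p ((algebraMap D F y)⁻¹) → PP p x ≤ PP p y := by
  obtain ⟨n, hn⟩ := hfin
  by_contra hcon
  push_neg at hcon
  have hcon' : ∀ x : D, x ≠ 0 → ¬ memI p ((algebraMap D F x)⁻¹) →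
      ∃ y : D, (y ≠ 0 ∧ ¬ memI p ((algebraMap D F y)⁻¹)) ∧ ¬ PP p x ≤ PP p y := by
    intro x hx hxp
    obtain ⟨y, h1, h2, h3⟩ := hcon x ⟨hx, hxp⟩
    exact ⟨y, ⟨h1, h2⟩, h3⟩
  classical
  choose yf hyf using hcon'
  -- the strictly decreasing sequence
  let Tp := {x : D // x ≠ 0 ∧ ¬ memI p ((algebraMap D F x)⁻¹)}
  let step : Tp → Tp := fun x =>
    ⟨x.1 * yf x.1 x.2.1 x.2.2,
      mul_ne_zero x.2.1 (hyf x.1 x.2.1 x.2.2).1.1,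
      avoid_of_prime_mul hp x.2.1 (hyf x.1 x.2.1 x.2.2).1.1 x.2.2 (hyf x.1 x.2.1 x.2.2).1.2⟩
  let g : ℕ → Tp := fun k => Nat.rec ⟨1, one_in_T hp⟩ (fun _ x => step x) k
  have hgsucc : ∀ k, g (k + 1) = step (g k) := fun k => rfl
  have hdec : ∀ k, PP p (g (k + 1)).1 < PP p (g k).1 := by
    intro k
    rw [hgsucc]
    set x := g k
    set y := yf x.1 x.2.1 x.2.2 with hy
    have hylt := (hyf x.1 x.2.1 x.2.2).2
    have hy1 := (hyf x.1 x.2.1 x.2.2).1.1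
    constructor
    · exact PP_mul_le_left hy1
    · intro hle
      apply hylt
      calc PP p x.1 ≤ PP p (x.1 * y) := hle
        _ ≤ PP p y := PP_mul_le_right x.2.1
  have hprime : ∀ k, (PP p (g k).1).IsPrime := fun k => PP_isPrime hp (g k).2.1 (g k).2.2
  -- build a strictly increasing chain of primes of length n+1
  let s : LTSeries (PrimeSpectrum (recipCompl D F)) :=
    ⟨n + 1, fun i => ⟨PP p (g (n + 1 - i.1)).1, hprime _⟩, by
      intro i
      have e1 : n + 1 - (i.castSucc : Fin (n+2)).1 = (n - i.1) + 1 := by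
        have := i.isLt; simp only [Fin.coe_castSucc]; omega
      have e2 : n + 1 - (i.succ : Fin (n+2)).1 = n - i.1 := by
        have := i.isLt; simp only [Fin.val_succ]; omega
      have hlt : PP p (g ((n - i.1) + 1)).1 < PP p (g (n - i.1)).1 := hdec _
      refine (lt_iff_le_not_ge (α := PrimeSpectrum (recipCompl D F))).mpr ?_
      constructor
      · show (⟨PP p (g (n + 1 - (i.castSucc).1)).1, _⟩ : PrimeSpectrum _) ≤ _
        rw [← PrimeSpectrum.asIdeal_le_asIdeal]
        simp only [e1, e2]
        exact le_of_lt hlt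
      · intro hcontra
        rw [← PrimeSpectrum.asIdeal_le_asIdeal] at hcontra
        simp only [e1, e2] at hcontra
        exact (lt_iff_le_not_ge.mp hlt).2 hcontra⟩
  have hlen : (s.length : WithBot (WithTop ℕ)) ≤ Order.krullDim (PrimeSpectrum (recipCompl D F)) :=
    Order.LTSeries.length_le_krullDim s
  have hlen' : ((n + 1 : ℕ) : WithBot (WithTop ℕ)) ≤ ((n : ℕ) : WithBot (WithTop ℕ)) :=
    le_trans hlen hn
  exact absurd hlen' (by exact_mod_cast Nat.not_succ_le_self n)

end Stmt13

/-- If `R(D)` has finite Krull dimension, then every prime ideal of `R(D)` is of the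
form `p_x` for some nonzero `x ∈ D`; in particular `R(D)` has nonzero pseudoradical. -/
theorem stmt13 (D F : Type*) [CommRing D] [IsDomain D] [Field F] [Algebra D F]
    [IsFractionRing D F] (hfin : ∃ n : ℕ, ringKrullDim (recipCompl D F) ≤ n) :
    (∀ p : Ideal (recipCompl D F), p.IsPrime →
      ∃ (x : D) (hx : x ≠ 0), IsMaxPrimeAvoiding D F x hx p) ∧
    (∃ r : recipCompl D F, r ≠ 0 ∧
      ∀ q : Ideal (recipCompl D F), q.IsPrime → q ≠ ⊥ → r ∈ q) := by
  have main : ∀ p : Ideal (recipCompl D F), p.IsPrime →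
      ∃ (x : D) (hx : x ≠ 0), IsMaxPrimeAvoiding D F x hx p := by
    intro p hp
    obtain ⟨x, ⟨hx0, hxp⟩, hstab⟩ := Stmt13.exists_stable hp hfin
    refine ⟨x, hx0, hp, ?_, ?_⟩
    · intro hmem
      exact hxp ((Stmt13.recipElem_mem_iff hx0).mp hmem)
    · intro Q hQ hQx
      have hQx' : ¬ Stmt13.memI Q ((algebraMap D F x)⁻¹) :=
        fun h => hQx ((Stmt13.recipElem_mem_iff hx0).mpr h)
      have h1 : Q ≤ Stmt13.PP p x := Stmt13.le_PP hp hx0 hxp hQ hQx'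
      have h2 : Stmt13.PP p x ≤ p := by
        intro z hz
        have hmz : Stmt13.memI p (z : F) := by
          refine Stmt13.recip_transfer (Stmt13.PP_isPrime hp hx0 hxp) ?_ (z : F) ⟨z.2, hz⟩
          intro d hd hdP
          by_contra hdp
          have hxd0 : x * d ≠ 0 := mul_ne_zero hx0 hd
          have hxdp : ¬ Stmt13.memI p ((algebraMap D F (x * d))⁻¹) :=
            Stmt13.avoid_of_prime_mul hp hx0 hd hxp hdp
          have hle : Stmt13.PP p x ≤ Stmt13.PP p (x * d) := hstab (x * d) hxd0 hxdp
          have hdPP : Stmt13.memI (Stmt13.PP p (x * d)) ((algebraMap D F d)⁻¹) := by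
            obtain ⟨hmem, hm⟩ := hdP
            exact ⟨hmem, hle hm⟩
          apply Stmt13.PP_avoid hp hxd0 hxdp
          rw [map_mul, mul_inv]
          exact hdPP.mul_left (Stmt13.rec_mem hx0)
        obtain ⟨hmem, hm⟩ := hmz
        exact hm
      exact le_trans h1 h2
  refine ⟨main, ?_⟩
  obtain ⟨x, hx, hmax⟩ := main ⊥ Ideal.bot_prime
  refine ⟨recipElem D F x hx, ?_, ?_⟩
  · intro h
    have h0 : ((algebraMap D F x)⁻¹ : F) = 0 := congrArg Subtype.val h
    rw [inv_eq_zero] at h0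
    exact Stmt13.phi_ne hx h0
  · intro q hq hqbot
    by_contra hr
    exact hqbot (le_bot_iff.mp (hmax.2.2 q hq hr))
end

section
/- Let G be a totally ordered abelian group, let S = G_{≥0} be the monoid of nonnegative elements of G, let K be a field, and let D = K[S] be the monoid algebra. Then the localization of D at the maximal ideal m_S generated by the monomials X^s with s > 0 is a valuation domain, and the reciprocal complement R(D) is isomorphic to this localization D_{m_S}. In particular, R(K[G_{≥0}]) is a valuation domain. -/
namespace Stmt17
set_option linter.unusedSectionVars false

open AddMonoidAlgebra Finsupp

variable {G : Type*} [AddCommGroup G] [LinearOrder G] [IsOrderedAddMonoid G]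

/-- truncated subtraction on the nonnegative cone -/
def msub (a b : {g : G // 0 ≤ g}) : {g : G // 0 ≤ g} :=
  ⟨max ((a : G) - (b : G)) 0, le_max_right _ _⟩

lemma add_msub {a b : {g : G // 0 ≤ g}} (h : b ≤ a) : b + msub a b = a := by
  apply Subtype.ext
  rw [Nonneg.coe_add]
  show (b : G) + max ((a : G) - (b : G)) 0 = a
  rw [max_eq_left (sub_nonneg.2 (Subtype.coe_le_coe.2 h))]
  abel

lemma msub_eq_zero_iff {a b : {g : G // 0 ≤ g}} : msub a b = 0 ↔ (a : G) ≤ (b : G) := by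
  rw [Subtype.ext_iff]
  show max ((a : G) - (b : G)) 0 = ((0 : {g : G // 0 ≤ g}) : G) ↔ _
  rw [Nonneg.coe_zero, max_eq_right_iff, sub_nonpos]

lemma S_zero_le (a : {g : G // 0 ≤ g}) : 0 ≤ a := Subtype.coe_le_coe.1 (by
  rw [Nonneg.coe_zero]; exact a.2)

lemma S_add_eq_zero {a b : {g : G // 0 ≤ g}} (h : a + b = 0) : a = 0 := by
  have hco : (a : G) + (b : G) = 0 := by
    rw [← Nonneg.coe_add, h, Nonneg.coe_zero]
  have h1 : (a : G) ≤ 0 := by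
    calc (a : G) = a + 0 := (add_zero _).symm
    _ ≤ (a : G) + b := by exact add_le_add (le_refl _) b.2
    _ = 0 := hco
  exact Subtype.ext (le_antisymm h1 a.2)

variable {K : Type*} [Field K]

/-- the "constant term" character of the monoid algebra -/
noncomputable def eps : AddMonoidAlgebra K {g : G // 0 ≤ g} →+* K :=
  AddMonoidAlgebra.liftNCRingHom (RingHom.id K)
    { toFun := fun s => if (Multiplicative.toAdd s : {g : G // 0 ≤ g}) = 0 then 1 else 0
      map_one' := by simp
      map_mul' := by
        intro s t
        simp only [toAdd_mul]
        by_cases hs : (Multiplicative.toAdd s : {g : G // 0 ≤ g}) = 0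
        · by_cases ht : (Multiplicative.toAdd t : {g : G // 0 ≤ g}) = 0
          · simp [hs, ht]
          · rw [if_neg ht, if_neg, mul_zero]
            intro h
            rw [hs, zero_add] at h
            exact ht h
        · rw [if_neg hs, if_neg, zero_mul]
          intro h
          exact hs (S_add_eq_zero h) }
    (fun _ _ => Commute.all _ _)

lemma eps_single (s : {g : G // 0 ≤ g}) (a : K) :
    eps (AddMonoidAlgebra.single s a) = if s = 0 then a else 0 := by
  show AddMonoidAlgebra.liftNC _ _ (AddMonoidAlgebra.single s a) = _
  rw [AddMonoidAlgebra.liftNC_single]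
  simp only [RingHom.id_apply, MonoidHom.coe_mk, OneHom.coe_mk, toAdd_ofAdd]
  split <;> simp

lemma eps_apply (f : AddMonoidAlgebra K {g : G // 0 ≤ g}) : eps f = f.coeff 0 := by
  conv_lhs => rw [← AddMonoidAlgebra.sum_coeff_single f]
  rw [map_finsuppSum]
  simp only [eps_single]
  rw [Finsupp.sum, Finset.sum_ite_eq' f.coeff.support 0 (fun t => f.coeff t)]
  split
  · rfl
  · exact (Finsupp.notMem_support_iff.1 (by assumption)).symm

variable {F : Type*} [Field F] [IsDomain (AddMonoidAlgebra K {g : G // 0 ≤ g})]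
  [Algebra (AddMonoidAlgebra K {g : G // 0 ≤ g}) F]
  [IsFractionRing (AddMonoidAlgebra K {g : G // 0 ≤ g}) F]

local notation "ι" => algebraMap (AddMonoidAlgebra K {g : G // 0 ≤ g}) F

lemma X_ne_zero (s : {g : G // 0 ≤ g}) : (AddMonoidAlgebra.single s 1 : AddMonoidAlgebra K {g : G // 0 ≤ g}) ≠ 0 :=
  fun h => one_ne_zero (AddMonoidAlgebra.single_eq_zero.1 h)

lemma iota_ne_zero {d : AddMonoidAlgebra K {g : G // 0 ≤ g}} (hd : d ≠ 0) : ι d ≠ 0 :=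
  (map_ne_zero_iff _ (IsFractionRing.injective _ F)).2 hd

lemma eps_ne_zero_imp {b : AddMonoidAlgebra K {g : G // 0 ≤ g}} (hb : eps b ≠ 0) : b ≠ 0 := by
  intro h; exact hb (by rw [h, map_zero])

/-- the monoid hom `X^s ↦ (X^s)⁻¹` -/
noncomputable def xinv : Multiplicative {g : G // 0 ≤ g} →* F where
  toFun := fun s => (ι (AddMonoidAlgebra.single (Multiplicative.toAdd s) 1))⁻¹
  map_one' := by
    show (ι (AddMonoidAlgebra.single (Multiplicative.toAdd (1 : Multiplicative {g : G // 0 ≤ g})) 1))⁻¹ = 1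
    rw [toAdd_one, ← AddMonoidAlgebra.one_def, map_one, inv_one]
  map_mul' := by
    intro s t
    show (ι (AddMonoidAlgebra.single (Multiplicative.toAdd (s * t)) 1))⁻¹ =
      (ι (AddMonoidAlgebra.single (Multiplicative.toAdd s) 1))⁻¹ *
        (ι (AddMonoidAlgebra.single (Multiplicative.toAdd t) 1))⁻¹
    have e : (AddMonoidAlgebra.single (Multiplicative.toAdd (s * t)) 1 :
        AddMonoidAlgebra K {g : G // 0 ≤ g}) =
        AddMonoidAlgebra.single (Multiplicative.toAdd s) 1 *
          AddMonoidAlgebra.single (Multiplicative.toAdd t) 1 := by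
      rw [AddMonoidAlgebra.single_mul_single, one_mul, toAdd_mul]
    rw [e, map_mul, mul_inv]

/-- the twisted embedding -/
noncomputable def phi : AddMonoidAlgebra K {g : G // 0 ≤ g} →+* F :=
  AddMonoidAlgebra.liftNCRingHom
    ((algebraMap (AddMonoidAlgebra K {g : G // 0 ≤ g}) F).comp
      (AddMonoidAlgebra.singleZeroRingHom : K →+* AddMonoidAlgebra K {g : G // 0 ≤ g}))
    (xinv (K := K)) (fun _ _ => Commute.all _ _)

lemma phi_single (s : {g : G // 0 ≤ g}) (a : K) :
    phi (AddMonoidAlgebra.single s a) = ι (AddMonoidAlgebra.single 0 a) *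
      (ι (AddMonoidAlgebra.single s 1))⁻¹ := by
  show AddMonoidAlgebra.liftNC
      (((algebraMap (AddMonoidAlgebra K {g : G // 0 ≤ g}) F).comp
        (AddMonoidAlgebra.singleZeroRingHom : K →+* AddMonoidAlgebra K {g : G // 0 ≤ g})) :
          K →+ F)
      (xinv (K := K) : Multiplicative {g : G // 0 ≤ g} →* F) (AddMonoidAlgebra.single s a) = _
  rw [AddMonoidAlgebra.liftNC_single]
  rfl

lemma phi_single_zero (a : K) :
    phi (AddMonoidAlgebra.single (0 : {g : G // 0 ≤ g}) a) =
      ι (AddMonoidAlgebra.single (0 : {g : G // 0 ≤ g}) a) := by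
  rw [phi_single, ← AddMonoidAlgebra.one_def, map_one, inv_one, mul_one]

/-- the fundamental reversal identity -/
lemma phi_mul_X {f : AddMonoidAlgebra K {g : G // 0 ≤ g}} {m : {g : G // 0 ≤ g}}
    (hm : ∀ s ∈ f.coeff.support, s ≤ m) :
    phi f * ι (AddMonoidAlgebra.single m 1) =
      ι (f.coeff.sum fun s a => AddMonoidAlgebra.single (msub m s) a) := by
  conv_lhs => rw [← AddMonoidAlgebra.sum_coeff_single f]
  rw [map_finsuppSum, map_finsuppSum, Finsupp.sum, Finsupp.sum, Finset.sum_mul]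
  refine Finset.sum_congr rfl fun s hs => ?_
  rw [phi_single]
  have hXs : ι (AddMonoidAlgebra.single s 1) ≠ 0 := iota_ne_zero (X_ne_zero s)
  have h2 : msub m s + s = m := by rw [add_comm]; exact add_msub (hm s hs)
  have e : (AddMonoidAlgebra.single 0 (f.coeff s) * AddMonoidAlgebra.single m 1 :
      AddMonoidAlgebra K {g : G // 0 ≤ g}) =
      AddMonoidAlgebra.single (msub m s) (f.coeff s) * AddMonoidAlgebra.single s 1 := by
    simp only [AddMonoidAlgebra.single_mul_single, zero_add, mul_one, h2]
  field_simp
  rw [← map_mul, ← map_mul, e, mul_comm]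

/-- maximal element of the support -/
noncomputable def maxdeg (f : AddMonoidAlgebra K {g : G // 0 ≤ g}) (hf : f ≠ 0) : {g : G // 0 ≤ g} :=
  f.coeff.support.max' (Finsupp.support_nonempty_iff.2 (AddMonoidAlgebra.coeff_eq_zero.not.2 hf))

/-- the reversed polynomial -/
noncomputable def rev (f : AddMonoidAlgebra K {g : G // 0 ≤ g}) (hf : f ≠ 0) :
    AddMonoidAlgebra K {g : G // 0 ≤ g} :=
  f.coeff.sum fun s a => AddMonoidAlgebra.single (msub (maxdeg f hf) s) a

lemma eps_msum (f : AddMonoidAlgebra K {g : G // 0 ≤ g}) (c : {g : G // 0 ≤ g} → {g : G // 0 ≤ g})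
    (w : {g : G // 0 ≤ g}) (hw : w ∈ f.coeff.support) (hc : ∀ t ∈ f.coeff.support, (c t = 0 ↔ t = w)) :
    eps (f.coeff.sum fun t a => AddMonoidAlgebra.single (c t) a) = f.coeff w := by
  rw [map_finsuppSum]
  simp only [eps_single]
  rw [Finsupp.sum, Finset.sum_congr rfl (fun t ht => if_congr (hc t ht) rfl rfl),
    Finset.sum_ite_eq' f.coeff.support w (fun t => f.coeff t), if_pos hw]

lemma eps_rev (f : AddMonoidAlgebra K {g : G // 0 ≤ g}) (hf : f ≠ 0) :
    eps (rev f hf) = f.coeff (maxdeg f hf) := by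
  refine eps_msum f _ _ (f.coeff.support.max'_mem _) fun t ht => ?_
  rw [msub_eq_zero_iff]
  constructor
  · intro h
    exact le_antisymm (f.coeff.support.le_max' t ht) (Subtype.coe_le_coe.1 h)
  · intro h; rw [h]

lemma eps_rev_ne_zero (f : AddMonoidAlgebra K {g : G // 0 ≤ g}) (hf : f ≠ 0) :
    eps (rev f hf) ≠ 0 := by
  rw [eps_rev]
  exact Finsupp.mem_support_iff.1 (f.coeff.support.max'_mem _)

lemma rev_ne_zero (f : AddMonoidAlgebra K {g : G // 0 ≤ g}) (hf : f ≠ 0) : rev f hf ≠ 0 :=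
  eps_ne_zero_imp (eps_rev_ne_zero f hf)

lemma phi_mul_X_rev (f : AddMonoidAlgebra K {g : G // 0 ≤ g}) (hf : f ≠ 0) :
    phi f * ι (AddMonoidAlgebra.single (maxdeg f hf) 1) = ι (rev f hf) :=
  phi_mul_X (fun _ hs => f.coeff.support.le_max' _ hs)

lemma phi_ne_zero {f : AddMonoidAlgebra K {g : G // 0 ≤ g}} (hf : f ≠ 0) : (phi f : F) ≠ 0 := by
  intro h
  have := phi_mul_X_rev (F := F) f hf
  rw [h, zero_mul] at this
  exact iota_ne_zero (rev_ne_zero f hf) this.symm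

lemma phi_injective : Function.Injective (phi : AddMonoidAlgebra K {g : G // 0 ≤ g} →+* F) := by
  intro a b h
  by_contra hne
  have h0 : phi (a - b) = (0 : F) := by rw [map_sub, h, sub_self]
  exact phi_ne_zero (sub_ne_zero.2 hne) h0

/-- the involution of `F` -/
noncomputable def sigma : F →+* F :=
  IsFractionRing.lift (A := AddMonoidAlgebra K {g : G // 0 ≤ g}) (g := (phi : AddMonoidAlgebra K {g : G // 0 ≤ g} →+* F))
    (K := F) phi_injective

local notation "σ" => (sigma (G := G) (K := K) (F := F))

lemma sigma_iota (d : AddMonoidAlgebra K {g : G // 0 ≤ g}) : σ (ι d) = phi d :=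
  IsFractionRing.lift_algebraMap _ _

lemma sigma_phi (d : AddMonoidAlgebra K {g : G // 0 ≤ g}) : σ (phi d) = ι d := by
  have : ((σ).comp (phi : AddMonoidAlgebra K {g : G // 0 ≤ g} →+* F)) = algebraMap _ F := by
    apply AddMonoidAlgebra.ringHom_ext
    · intro b
      rw [RingHom.comp_apply, phi_single_zero, sigma_iota, phi_single_zero]
    · intro a
      rw [RingHom.comp_apply, phi_single, ← AddMonoidAlgebra.one_def, map_one, one_mul,
        map_inv₀, sigma_iota, phi_single, ← AddMonoidAlgebra.one_def, map_one, one_mul, inv_inv]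
  exact RingHom.congr_fun this d

lemma sigma_sigma (x : F) : σ (σ x) = x := by
  have : ((σ).comp (σ) : F →+* F) = RingHom.id F := by
    apply IsLocalization.ringHom_ext (nonZeroDivisors (AddMonoidAlgebra K {g : G // 0 ≤ g}))
    refine RingHom.ext fun d => ?_
    simp only [RingHom.comp_apply, RingHom.id_apply, sigma_iota, sigma_phi]
  exact RingHom.congr_fun this x

lemma span_eq_ker :
    Ideal.span {d : AddMonoidAlgebra K {g : G // 0 ≤ g} |
        ∃ s : {g : G // 0 ≤ g}, 0 < (s : G) ∧ d = AddMonoidAlgebra.single s 1} =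
      RingHom.ker (eps : AddMonoidAlgebra K {g : G // 0 ≤ g} →+* K) := by
  apply le_antisymm
  · rw [Ideal.span_le]
    rintro d ⟨s, hs, rfl⟩
    have hsne : s ≠ 0 := by
      intro h
      rw [h, Nonneg.coe_zero] at hs
      exact lt_irrefl _ hs
    simp only [SetLike.mem_coe, RingHom.mem_ker, eps_single, if_neg hsne]
  · intro f hf
    rw [RingHom.mem_ker, eps_apply] at hf
    rw [← AddMonoidAlgebra.sum_coeff_single f, Finsupp.sum]
    refine Ideal.sum_mem _ fun s hs => ?_
    have hs0 : s ≠ 0 := by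
      intro h
      exact Finsupp.mem_support_iff.1 hs (h ▸ hf)
    have hpos : 0 < (s : G) := lt_of_le_of_ne s.2 (fun h0 => hs0 (Subtype.ext h0.symm))
    have he : AddMonoidAlgebra.single s (f.coeff s) =
        AddMonoidAlgebra.single 0 (f.coeff s) * AddMonoidAlgebra.single s 1 := by
      rw [AddMonoidAlgebra.single_mul_single, zero_add, mul_one]
    rw [he]
    exact Ideal.mul_mem_left _ _ (Ideal.subset_span ⟨s, hpos, rfl⟩)

lemma span_isMaximal :
    (Ideal.span {d : AddMonoidAlgebra K {g : G // 0 ≤ g} |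
        ∃ s : {g : G // 0 ≤ g}, 0 < (s : G) ∧ d = AddMonoidAlgebra.single s 1}).IsMaximal := by
  rw [span_eq_ker]
  exact RingHom.ker_isMaximal_of_surjective eps
    (fun c => ⟨AddMonoidAlgebra.single 0 c, by rw [eps_single, if_pos rfl]⟩)

lemma mem_span_iff (d : AddMonoidAlgebra K {g : G // 0 ≤ g}) :
    d ∈ Ideal.span {d : AddMonoidAlgebra K {g : G // 0 ≤ g} |
        ∃ s : {g : G // 0 ≤ g}, 0 < (s : G) ∧ d = AddMonoidAlgebra.single s 1} ↔ eps d = 0 := by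
  rw [span_eq_ker, RingHom.mem_ker]

lemma exists_factor (f : AddMonoidAlgebra K {g : G // 0 ≤ g}) (hf : f ≠ 0) :
    ∃ (s : {g : G // 0 ≤ g}) (h : AddMonoidAlgebra K {g : G // 0 ≤ g}),
      eps h ≠ 0 ∧ f = AddMonoidAlgebra.single s 1 * h := by
  set s := f.coeff.support.min' (Finsupp.support_nonempty_iff.2 (AddMonoidAlgebra.coeff_eq_zero.not.2 hf)) with hsdef
  refine ⟨s, f.coeff.sum fun t a => AddMonoidAlgebra.single (msub t s) a, ?_, ?_⟩
  · rw [eps_msum f _ s (f.coeff.support.min'_mem _) ?_]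
    · exact Finsupp.mem_support_iff.1 (f.coeff.support.min'_mem _)
    · intro t ht
      rw [msub_eq_zero_iff]
      constructor
      · intro hle
        exact le_antisymm (Subtype.coe_le_coe.1 hle) (f.coeff.support.min'_le t ht)
      · intro h
        rw [h]
  · conv_lhs => rw [← AddMonoidAlgebra.sum_coeff_single f]
    rw [Finsupp.sum, Finsupp.sum, Finset.mul_sum]
    exact Finset.sum_congr rfl fun t ht => by
      rw [AddMonoidAlgebra.single_mul_single, one_mul, add_msub (f.coeff.support.min'_le t ht)]

/-- the localization of `D` at the maximal ideal, as a subring of `F` -/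
def Lloc : Subring F where
  carrier := {x : F | ∃ a b : AddMonoidAlgebra K {g : G // 0 ≤ g},
    eps b ≠ 0 ∧ x = ι a * (ι b)⁻¹}
  one_mem' := ⟨1, 1, by rw [map_one]; exact one_ne_zero,
    by rw [map_one, inv_one, mul_one]⟩
  zero_mem' := ⟨0, 1, by rw [map_one]; exact one_ne_zero,
    by rw [map_zero, zero_mul]⟩
  add_mem' := by
    rintro x y ⟨a, b, hb, rfl⟩ ⟨c, d, hd, rfl⟩
    refine ⟨a * d + c * b, b * d, by rw [map_mul]; exact mul_ne_zero hb hd, ?_⟩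
    have hb' : ι b ≠ 0 := iota_ne_zero (eps_ne_zero_imp hb)
    have hd' : ι d ≠ 0 := iota_ne_zero (eps_ne_zero_imp hd)
    simp only [map_add, map_mul]
    first
    | (field_simp; ring)
    | field_simp
  mul_mem' := by
    rintro x y ⟨a, b, hb, rfl⟩ ⟨c, d, hd, rfl⟩
    refine ⟨a * c, b * d, by rw [map_mul]; exact mul_ne_zero hb hd, ?_⟩
    have hb' : ι b ≠ 0 := iota_ne_zero (eps_ne_zero_imp hb)
    have hd' : ι d ≠ 0 := iota_ne_zero (eps_ne_zero_imp hd)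
    simp only [map_add, map_mul]
    first
    | (field_simp; ring)
    | field_simp
  neg_mem' := by
    rintro x ⟨a, b, hb, rfl⟩
    exact ⟨-a, b, hb, by rw [map_neg, neg_mul]⟩

local notation "𝓛" => (Lloc (G := G) (K := K) (F := F))

lemma mem_Lloc_iff (x : F) : x ∈ 𝓛 ↔ ∃ a b : AddMonoidAlgebra K {g : G // 0 ≤ g},
    eps b ≠ 0 ∧ x = ι a * (ι b)⁻¹ := Iff.rfl

lemma closure_eq_Lloc :
    Subring.closure
      (Set.range ι ∪
        {y : F | ∃ b ∉ Ideal.span {d : AddMonoidAlgebra K {g : G // 0 ≤ g} |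
          ∃ s : {g : G // 0 ≤ g}, 0 < (s : G) ∧ d = AddMonoidAlgebra.single s 1},
            y = (ι b)⁻¹}) = 𝓛 := by
  apply le_antisymm
  · rw [Subring.closure_le]
    rintro x (⟨a, rfl⟩ | ⟨b, hb, rfl⟩)
    · exact ⟨a, 1, by rw [map_one]; exact one_ne_zero,
        by rw [map_one, inv_one, mul_one]⟩
    · rw [mem_span_iff] at hb
      exact ⟨1, b, hb, by rw [map_one, one_mul]⟩
  · rintro x ⟨a, b, hb, rfl⟩
    refine mul_mem (Subring.subset_closure (Or.inl ⟨a, rfl⟩))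
      (Subring.subset_closure (Or.inr ⟨b, ?_, rfl⟩))
    rw [mem_span_iff]
    exact hb

lemma mem_or_inv_mem (x : F) : x ∈ 𝓛 ∨ x⁻¹ ∈ 𝓛 := by
  obtain ⟨f, g, hg, hx⟩ := IsFractionRing.div_surjective
    (A := AddMonoidAlgebra K {g : G // 0 ≤ g}) x
  have hg0 : g ≠ 0 := mem_nonZeroDivisors_iff_ne_zero.1 hg
  by_cases hf0 : f = 0
  · left
    exact ⟨0, 1, by rw [map_one]; exact one_ne_zero,
      by rw [← hx, hf0, map_zero, zero_div, zero_mul]⟩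
  obtain ⟨s, p, hp, hfp⟩ := exists_factor f hf0
  obtain ⟨t, q, hq, hgq⟩ := exists_factor g hg0
  have hq' : ι q ≠ 0 := iota_ne_zero (eps_ne_zero_imp hq)
  have hp' : ι p ≠ 0 := iota_ne_zero (eps_ne_zero_imp hp)
  rcases le_total t s with hts | hst
  · left
    refine ⟨AddMonoidAlgebra.single (msub s t) 1 * p, q, hq, ?_⟩
    have hXt : ι (AddMonoidAlgebra.single t 1) ≠ 0 := iota_ne_zero (X_ne_zero t)
    have e : (AddMonoidAlgebra.single s 1 : AddMonoidAlgebra K {g : G // 0 ≤ g}) =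
        AddMonoidAlgebra.single t 1 * AddMonoidAlgebra.single (msub s t) 1 := by
      rw [AddMonoidAlgebra.single_mul_single, mul_one, add_msub hts]
    rw [← hx, hfp, hgq, e]
    rw [map_mul, map_mul, map_mul, map_mul]
    field_simp
  · right
    refine ⟨AddMonoidAlgebra.single (msub t s) 1 * q, p, hp, ?_⟩
    have hXs : ι (AddMonoidAlgebra.single s 1) ≠ 0 := iota_ne_zero (X_ne_zero s)
    have e : (AddMonoidAlgebra.single t 1 : AddMonoidAlgebra K {g : G // 0 ≤ g}) =
        AddMonoidAlgebra.single s 1 * AddMonoidAlgebra.single (msub t s) 1 := by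
      rw [AddMonoidAlgebra.single_mul_single, mul_one, add_msub hst]
    rw [← hx, hfp, hgq, e, inv_div]
    rw [map_mul, map_mul, map_mul, map_mul]
    field_simp

lemma valuationRing_Lloc : ValuationRing 𝓛 := by
  refine @ValuationRing.mk _ _ _ ⟨fun a b => ?_⟩
  by_cases hb : (b : F) = 0
  · exact ⟨0, Or.inl (Subtype.ext (by simp [hb]))⟩
  by_cases ha : (a : F) = 0
  · exact ⟨0, Or.inr (Subtype.ext (by simp [ha]))⟩
  rcases mem_or_inv_mem (G := G) (K := K) (F := F) ((a : F)⁻¹ * b) with hm | hm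
  · refine ⟨⟨_, hm⟩, Or.inl (Subtype.ext ?_)⟩
    show (a : F) * ((a : F)⁻¹ * b) = b
    field_simp
  · refine ⟨⟨_, hm⟩, Or.inr (Subtype.ext ?_)⟩
    show (b : F) * ((a : F)⁻¹ * (b : F))⁻¹ = a
    rw [mul_inv, inv_inv]
    field_simp

local notation "RD" => recipCompl (AddMonoidAlgebra K {g : G // 0 ≤ g}) F

lemma const_mem (c : K) : ι (AddMonoidAlgebra.single 0 c) ∈ RD := by
  by_cases hc : c = 0
  · rw [hc, show (AddMonoidAlgebra.single (0 : {g : G // 0 ≤ g}) (0 : K) :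
        AddMonoidAlgebra K {g : G // 0 ≤ g}) = 0 from AddMonoidAlgebra.single_zero _, map_zero]
    exact zero_mem _
  · have h1 : ι (AddMonoidAlgebra.single (0 : {g : G // 0 ≤ g}) c) =
        (ι (AddMonoidAlgebra.single (0 : {g : G // 0 ≤ g}) c⁻¹))⁻¹ := by
      apply eq_inv_of_mul_eq_one_left
      rw [← map_mul, AddMonoidAlgebra.single_mul_single, zero_add, mul_inv_cancel₀ hc,
        ← AddMonoidAlgebra.one_def, map_one]
    rw [h1]
    exact Subring.subset_closure
      ⟨AddMonoidAlgebra.single 0 c⁻¹,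
        fun h => inv_ne_zero hc (AddMonoidAlgebra.single_eq_zero.1 h), rfl⟩

lemma Xinv_mem (s : {g : G // 0 ≤ g}) : (ι (AddMonoidAlgebra.single s 1))⁻¹ ∈ RD :=
  Subring.subset_closure ⟨_, X_ne_zero s, rfl⟩

lemma phi_mem (d : AddMonoidAlgebra K {g : G // 0 ≤ g}) : (phi d : F) ∈ RD := by
  have hd : d = d.coeff.sum fun s a =>
      (AddMonoidAlgebra.single s a : AddMonoidAlgebra K {g : G // 0 ≤ g}) :=
    (AddMonoidAlgebra.sum_coeff_single d).symm
  rw [hd, map_finsuppSum, Finsupp.sum]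
  refine sum_mem fun s hs => ?_
  rw [phi_single]
  exact mul_mem (const_mem _) (Xinv_mem _)

lemma inv_phi_eq (b : AddMonoidAlgebra K {g : G // 0 ≤ g}) (hb0 : b ≠ 0) :
    ((phi b : F))⁻¹ = ι (AddMonoidAlgebra.single (maxdeg b hb0) 1) * (ι (rev b hb0))⁻¹ := by
  have h := phi_mul_X_rev (F := F) b hb0
  have hX : ι (AddMonoidAlgebra.single (maxdeg b hb0) 1) ≠ 0 := iota_ne_zero (X_ne_zero _)
  rw [← h, mul_inv, mul_comm ((phi b : F))⁻¹ _, ← mul_assoc, mul_inv_cancel₀ hX, one_mul]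

lemma inv_phi_mem : ∀ (n : ℕ) (b : AddMonoidAlgebra K {g : G // 0 ≤ g}),
    b.coeff.support.card ≤ n → eps b ≠ 0 → ((phi b : F))⁻¹ ∈ RD := by
  intro n
  induction n with
  | zero =>
    intro b hcard hb
    exfalso
    apply hb
    have hb0 : b = 0 := by
      rw [← AddMonoidAlgebra.coeff_eq_zero, ← Finsupp.support_eq_empty, ← Finset.card_eq_zero]
      omega
    rw [hb0, map_zero]
  | succ n ih =>
    intro b hcard hb
    have hb0 : b ≠ 0 := eps_ne_zero_imp hb
    by_cases hm0 : maxdeg b hb0 = 0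
    · have hbs : b = AddMonoidAlgebra.single 0 (eps b) := by
        rw [eps_apply]
        ext t
        by_cases ht : t = 0
        · rw [ht, AddMonoidAlgebra.coeff_single, Finsupp.single_eq_same]
        · rw [AddMonoidAlgebra.coeff_single, Finsupp.single_eq_of_ne ht]
          by_contra hbt
          have hmem : t ∈ b.coeff.support := Finsupp.mem_support_iff.2 hbt
          have h1 : t ≤ maxdeg b hb0 := Finset.le_max' _ _ hmem
          exact ht (le_antisymm (hm0 ▸ h1) (S_zero_le t))
      rw [hbs, phi_single_zero]
      exact Subring.subset_closure
        ⟨AddMonoidAlgebra.single 0 (eps b), fun h => hb (AddMonoidAlgebra.single_eq_zero.1 h), rfl⟩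
    · have hmem : maxdeg b hb0 ∈ b.coeff.support := Finset.max'_mem _ _
      have hr0 : eps (AddMonoidAlgebra.erase (maxdeg b hb0) b) ≠ 0 := by
        rw [eps_apply, AddMonoidAlgebra.coeff_erase, Finsupp.erase_ne (fun h0 => hm0 h0.symm), ← eps_apply]
        exact hb
      have hrne : AddMonoidAlgebra.erase (maxdeg b hb0) b ≠ 0 := eps_ne_zero_imp hr0
      have hcard' : (AddMonoidAlgebra.erase (maxdeg b hb0) b).coeff.support.card ≤ n := by
        rw [AddMonoidAlgebra.coeff_erase, Finsupp.support_erase, Finset.card_erase_of_mem hmem]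
        omega
      have hIH := ih _ hcard' hr0
      have hphir : (phi (AddMonoidAlgebra.erase (maxdeg b hb0) b) : F) =
          phi b - phi (AddMonoidAlgebra.single (maxdeg b hb0) (b.coeff (maxdeg b hb0))) := by
        apply eq_sub_of_add_eq
        rw [← map_add]
        congr 1
        exact AddMonoidAlgebra.erase_add_single _ _
      have hb' : (phi b : F) ≠ 0 := phi_ne_zero hb0
      have hX : ι (AddMonoidAlgebra.single (maxdeg b hb0) 1) ≠ 0 := iota_ne_zero (X_ne_zero _)
      have key : (phi (AddMonoidAlgebra.erase (maxdeg b hb0) b) : F) * (phi b)⁻¹ =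
          1 - ι (AddMonoidAlgebra.single 0 (b.coeff (maxdeg b hb0))) * (ι (rev b hb0))⁻¹ := by
        rw [hphir, sub_mul, mul_inv_cancel₀ hb']
        congr 1
        rw [phi_single, mul_assoc]
        congr 1
        rw [← mul_inv, mul_comm (ι (AddMonoidAlgebra.single (maxdeg b hb0) 1)) (phi b : F),
          phi_mul_X_rev]
      have final : ((phi b : F))⁻¹ =
          (phi (AddMonoidAlgebra.erase (maxdeg b hb0) b) : F)⁻¹ *
            ((phi (AddMonoidAlgebra.erase (maxdeg b hb0) b) : F) * (phi b)⁻¹) := by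
        rw [← mul_assoc, inv_mul_cancel₀ (phi_ne_zero hrne), one_mul]
      rw [final, key]
      exact mul_mem hIH (sub_mem (one_mem _)
        (mul_mem (const_mem _)
          (Subring.subset_closure ⟨_, rev_ne_zero b hb0, rfl⟩)))

lemma map_sigma_recip : Subring.map (σ) RD = 𝓛 := by
  apply le_antisymm
  · rw [recipCompl, RingHom.map_closure, Subring.closure_le]
    rintro x ⟨y, ⟨d, hd, rfl⟩, rfl⟩
    rw [map_inv₀, sigma_iota]
    exact ⟨AddMonoidAlgebra.single (maxdeg d hd) 1, rev d hd, eps_rev_ne_zero d hd,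
      inv_phi_eq d hd⟩
  · intro x hx
    rw [Subring.mem_map]
    refine ⟨σ x, ?_, sigma_sigma x⟩
    obtain ⟨a, b, hb, rfl⟩ := hx
    rw [map_mul, map_inv₀, sigma_iota, sigma_iota]
    exact mul_mem (phi_mem a) (inv_phi_mem _ b le_rfl hb)

/-- `σ` as a ring equivalence -/
noncomputable def sigmaEquiv : F ≃+* F :=
  RingEquiv.ofRingHom σ σ
    (by
      refine RingHom.ext fun x => ?_
      simp only [RingHom.comp_apply, RingHom.id_apply]
      exact sigma_sigma x)
    (by
      refine RingHom.ext fun x => ?_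
      simp only [RingHom.comp_apply, RingHom.id_apply]
      exact sigma_sigma x)

end Stmt17

/-- Let `G` be a totally ordered abelian group, `S = G_{≥0}`, `K` a field and
`D = K[S]` the monoid algebra. Then the ideal `m_S` generated by the monomials `X^s`
with `s > 0` is maximal, the localization `D_{m_S}` (viewed as a subring of the
quotient field, generated by `D` and the inverses of the elements outside `m_S`) is a
valuation domain, and `R(D)` is isomorphic to `D_{m_S}`. -/
theorem stmt17 (G K F : Type*) [AddCommGroup G] [LinearOrder G] [IsOrderedAddMonoid G] [Field K] [Field F]
    [IsDomain (AddMonoidAlgebra K {g : G // 0 ≤ g})]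
    [Algebra (AddMonoidAlgebra K {g : G // 0 ≤ g}) F]
    [IsFractionRing (AddMonoidAlgebra K {g : G // 0 ≤ g}) F] :
    ∀ mS : Ideal (AddMonoidAlgebra K {g : G // 0 ≤ g}),
      mS = Ideal.span {d : AddMonoidAlgebra K {g : G // 0 ≤ g} |
        ∃ s : {g : G // 0 ≤ g}, 0 < (s : G) ∧ d = AddMonoidAlgebra.single s 1} →
      mS.IsMaximal ∧
      ValuationRing (Subring.closure
        (Set.range (algebraMap (AddMonoidAlgebra K {g : G // 0 ≤ g}) F) ∪
          {y : F | ∃ b ∉ mS, y = (algebraMap (AddMonoidAlgebra K {g : G // 0 ≤ g}) F b)⁻¹})) ∧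
      Nonempty (recipCompl (AddMonoidAlgebra K {g : G // 0 ≤ g}) F ≃+*
        (Subring.closure
          (Set.range (algebraMap (AddMonoidAlgebra K {g : G // 0 ≤ g}) F) ∪
            {y : F | ∃ b ∉ mS, y = (algebraMap (AddMonoidAlgebra K {g : G // 0 ≤ g}) F b)⁻¹}))) := by
  intro mS hmS
  subst hmS
  refine ⟨Stmt17.span_isMaximal (G := G) (K := K), ?_, ?_⟩
  · rw [Stmt17.closure_eq_Lloc (G := G) (K := K) (F := F)]
    exact Stmt17.valuationRing_Lloc (G := G) (K := K) (F := F)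
  · refine ⟨RingEquiv.trans
      (RingEquiv.subringMap (Stmt17.sigmaEquiv (G := G) (K := K) (F := F))
        (s := recipCompl (AddMonoidAlgebra K {g : G // 0 ≤ g}) F))
      (RingEquiv.subringCongr ?_)⟩
    have h1 : (Stmt17.sigmaEquiv (G := G) (K := K) (F := F)).toRingHom =
        Stmt17.sigma (G := G) (K := K) (F := F) := rfl
    rw [h1, Stmt17.map_sigma_recip (G := G) (K := K) (F := F),
      ← Stmt17.closure_eq_Lloc (G := G) (K := K) (F := F)]
end
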